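/- arXiv:1407.0373 — 4 statements merged into one kernel-verified Lean document; each statement's English description precedes it below -/
import Mathlib

section
/- For every partition λ of length r, the interpolated Weyl dimension function dim X_λ(t) = ∏_{i=1}^r [(t/2 + λ_i − i)·C(λ_i + t − r − i − 1, λ_i)] / [(t/2 − i)·C(λ_i + r − i, λ_i)] · ∏_{1≤i<j≤r} (λ_i − λ_j + j − i)(λ_i + λ_j + t − i − j) / ((j − i)(t − i − j)) is a polynomial in t with rational coefficients that takes integer values at all sufficiently large integers t, hence takes integer values at every integer t. -/
def qbinom (x : ℚ) (k : ℕ) : ℚ :=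
  (∏ i ∈ Finset.range k, (x - (i : ℚ))) / (Nat.factorial k : ℚ)

/-!
Write `h_m(t) = C(t + m - 1, m)` (with `h_m = 0` for `m < 0`), `x_i = λ_i - i` and
`w_i = x_i + t/2`. The polynomial is the orthogonal Jacobi–Trudi determinant
`det (h_{x_i + j} - h_{x_i - j})_{i,j ≤ r}`, integer-valued because its entries are.

To evaluate it, let `a⁽ⁿ⁾ = a (a+1) ⋯ (a+n-1)` and `c(t) = (t - 2r)⁽²ʳ⁾`. Then
`c · (h_{x+j} - h_{x-j}) = (t-2r)⁽ⁿ⁾/n! · P_j(x + t/2)` with `n = x + r`, where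
`P_j(w) = A_j(w) - A_j(-w)` and `A_j` is a product of two rising factorials of total degree
`2r`. Being odd of degree `≤ 2r`, the `P_j` give `(P_j(w_i)) = diag(w) · V(w²) · (coefficients)`
with `V` a Vandermonde matrix, so
`c^r · det = ∏_i (t-2r)⁽ⁿⁱ⁾/nᵢ! · w_i · ∏_{i<j} (w_j² - w_i²) · K(t)`, where `K` does not
depend on `λ`. At `λ = 0` the matrix is unitriangular, which determines `K`; the quotient of
the two products is the displayed expression, factor by factor. Finally `c` is a nonzero
polynomial, so it can be cancelled.
-/

open Polynomial Finset
open scoped Nat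

namespace Polynomial

variable {R : Type*} [CommRing R]

theorem coeff_two_mul_eq_zero_of_comp_neg_X [NoZeroDivisors R] [CharZero R] {p : R[X]}
    (hp : p.comp (-X) = -p) (k : ℕ) : p.coeff (2 * k) = 0 := by
  have h := congrArg (coeff · (2 * k)) hp
  rw [show (-X : R[X]) = C (-1) * X by simp] at h
  simp only [comp_C_mul_X_coeff, pow_mul, neg_one_sq, one_pow, mul_one, coeff_neg] at h
  exact self_eq_neg.mp h

theorem eval_eq_mul_sum_odd_coeff [NoZeroDivisors R] [CharZero R] {p : R[X]}
    (hp : p.comp (-X) = -p) {r : ℕ} (hdeg : p.natDegree ≤ 2 * r) (y : R) :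
    p.eval y = y * ∑ k ∈ range r, p.coeff (2 * k + 1) * (y ^ 2) ^ k := by
  have hsplit : ∀ m, ∑ i ∈ range (2 * m), p.coeff i * y ^ i =
      ∑ k ∈ range m, (p.coeff (2 * k) * y ^ (2 * k) + p.coeff (2 * k + 1) * y ^ (2 * k + 1)) := by
    intro m
    induction m with
    | zero => simp
    | succ m ih => rw [mul_add, mul_one, sum_range_succ, sum_range_succ, ih, sum_range_succ]; ring
  rw [eval_eq_sum_range' (Nat.lt_succ_of_le hdeg), sum_range_succ, hsplit, mul_sum]
  simp only [coeff_two_mul_eq_zero_of_comp_neg_X hp, zero_mul, zero_add, add_zero]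
  exact sum_congr rfl fun k _ => by ring

theorem ascPochhammer_eval_add_length {S : Type*} [CommSemiring S] (m n : ℕ) (x : S) :
    (ascPochhammer S (m + n)).eval x =
      (ascPochhammer S m).eval x * (ascPochhammer S n).eval (x + m) := by
  rw [← ascPochhammer_mul, eval_mul, eval_comp, eval_add, eval_X, eval_natCast]

theorem ascPochhammer_eval_eq_neg_one_pow_mul (n : ℕ) {y z : R} (h : y + z = 1 - n) :
    (ascPochhammer R n).eval y = (-1) ^ n * (ascPochhammer R n).eval z := by
  rw [show y = -(z + n - 1) by linear_combination h, ascPochhammer_eval_neg_eq_descPochhammer,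
    descPochhammer_eval_eq_ascPochhammer]
  ring_nf

end Polynomial

namespace Matrix

theorem det_eval_odd_polynomials {R : Type*} [CommRing R] [NoZeroDivisors R] [CharZero R]
    {r : ℕ} (P : Fin r → R[X]) (hodd : ∀ j, (P j).comp (-X) = -P j)
    (hdeg : ∀ j, (P j).natDegree ≤ 2 * r) (w : Fin r → R) :
    (of fun i j => (P j).eval (w i)).det =
      (∏ i, w i) * (∏ i, ∏ j ∈ Ioi i, (w j ^ 2 - w i ^ 2)) *
        (of fun k j : Fin r => (P j).coeff (2 * k + 1)).det := by
  have hfactor : (of fun i j => (P j).eval (w i)) = diagonal w * vandermonde (fun i => w i ^ 2) *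
      of fun k j : Fin r => (P j).coeff (2 * k + 1) := by
    ext i j
    rw [of_apply, eval_eq_mul_sum_odd_coeff (hodd j) (hdeg j), mul_assoc, diagonal_mul, mul_apply,
      ← Fin.sum_univ_eq_sum_range (fun k => (P j).coeff (2 * k + 1) * (w i ^ 2) ^ k)]
    simp only [vandermonde_apply, of_apply, mul_comm]
  rw [hfactor, det_mul, det_mul, det_diagonal, det_vandermonde]

theorem det_mem_range {n R S : Type*} [Fintype n] [DecidableEq n] [CommRing R] [CommRing S]
    (f : R →+* S) {A : Matrix n n S} (hA : ∀ i j, A i j ∈ f.range) : A.det ∈ f.range := by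
  choose B hB using hA
  exact ⟨(of B).det, by rw [RingHom.map_det]; congr; ext i j; exact hB i j⟩

end Matrix

theorem Finset.prod_filter_fst_lt_snd {α M : Type*} [Fintype α] [LinearOrder α]
    [LocallyFiniteOrderTop α] [CommMonoid M] (f : α × α → M) :
    ∏ q ∈ univ.filter (fun q : α × α => q.1 < q.2), f q = ∏ i, ∏ j ∈ Ioi i, f (i, j) := by
  rw [prod_filter, Fintype.prod_prod_type]
  refine prod_congr rfl fun i _ => ?_
  rw [← filter_lt_eq_Ioi, prod_filter]

section PolynomialFns

variable {R : Type*} [CommRing R]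

variable (R) in
noncomputable def polynomialFns : Subring (R → R) :=
  (RingHom.pi fun t : R => Polynomial.evalRingHom t).range

theorem mem_polynomialFns {f : R → R} :
    f ∈ polynomialFns R ↔ ∃ p : R[X], ∀ t, p.eval t = f t := by
  simp only [polynomialFns, RingHom.mem_range, funext_iff, RingHom.pi_apply, coe_evalRingHom]

theorem prod_mem_polynomialFns {ι : Type*} (s : Finset ι) {f : ι → R → R}
    (hf : ∀ i ∈ s, f i ∈ polynomialFns R) : (fun t => ∏ i ∈ s, f i t) ∈ polynomialFns R := by
  rw [← Finset.prod_fn]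
  exact prod_mem hf

theorem det_mem_polynomialFns {n : Type*} [Fintype n] [DecidableEq n] (M : R → Matrix n n R)
    (hM : ∀ i j, (fun t => M t i j) ∈ polynomialFns R) :
    (fun t => (M t).det) ∈ polynomialFns R := by
  have hdet : (fun t => (M t).det) = (Matrix.of fun i j t => M t i j).det := by
    ext t
    exact (RingHom.map_det (Pi.evalRingHom (fun _ : R => R) t)
      (Matrix.of fun i j t => M t i j)).symm
  exact hdet ▸ Matrix.det_mem_range _ hM

end PolynomialFns

theorem factorial_mul_qbinom (x : ℚ) (k : ℕ) :
    (k ! : ℚ) * qbinom x k = (ascPochhammer ℚ k).eval (x - k + 1) := by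
  rw [qbinom, ← descPochhammer_eval_eq_prod_range, descPochhammer_eval_eq_ascPochhammer]
  field_simp

theorem qbinom_comp_mem_polynomialFns {f : ℚ → ℚ} (hf : f ∈ polynomialFns ℚ) (k : ℕ) :
    (fun t => qbinom (f t) k) ∈ polynomialFns ℚ := by
  obtain ⟨p, hp⟩ := mem_polynomialFns.mp hf
  refine mem_polynomialFns.mpr ⟨C (k ! : ℚ)⁻¹ * (descPochhammer ℚ k).comp p, fun t => ?_⟩
  rw [eval_mul, eval_C, eval_comp, hp, descPochhammer_eval_eq_prod_range, qbinom, div_eq_inv_mul]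

theorem factorial_mul_multichoose_eq_eval (t : ℚ) (n : ℕ) :
    (n ! : ℚ) * Ring.multichoose t n = (ascPochhammer ℚ n).eval t := by
  rw [← nsmul_eq_mul, Ring.factorial_nsmul_multichoose_eq_ascPochhammer,
    ascPochhammer_smeval_eq_eval]

noncomputable def multichooseInt (t : ℚ) : ℤ → ℚ
  | Int.ofNat n => Ring.multichoose t n
  | Int.negSucc _ => 0

theorem multichooseInt_natCast (t : ℚ) (n : ℕ) :
    multichooseInt t n = Ring.multichoose t n := rfl

theorem multichooseInt_of_neg (t : ℚ) {m : ℤ} (hm : m < 0) : multichooseInt t m = 0 := by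
  cases m with
  | ofNat n => exact absurd hm (Int.natCast_nonneg n).not_gt
  | negSucc _ => rfl

theorem multichooseInt_mem_polynomialFns (m : ℤ) :
    (fun t => multichooseInt t m) ∈ polynomialFns ℚ := by
  rcases lt_or_ge m 0 with hm | hm
  · simp only [multichooseInt_of_neg _ hm]
    exact zero_mem _
  · obtain ⟨n, rfl⟩ := Int.eq_ofNat_of_zero_le hm
    refine mem_polynomialFns.mpr ⟨C (n ! : ℚ)⁻¹ * ascPochhammer ℚ n, fun t => ?_⟩
    rw [eval_mul, eval_C, ← factorial_mul_multichoose_eq_eval, multichooseInt_natCast,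
      inv_mul_cancel_left₀ (by positivity)]

theorem multichooseInt_intCast_mem_range (m k : ℤ) :
    multichooseInt m k ∈ (Int.castRingHom ℚ).range := by
  rcases lt_or_ge k 0 with hk | hk
  · rw [multichooseInt_of_neg _ hk]
    exact zero_mem _
  · obtain ⟨n, rfl⟩ := Int.eq_ofNat_of_zero_le hk
    exact ⟨Ring.multichoose m n, Ring.map_multichoose _ m n⟩

/-- For `0 ≤ M` this is `(t-k)⁽ᵏ⁾ t⁽ᴹ⁾ = (t-k)⁽ⁿ⁾ (t-k+n)⁽ᵇ⁾` together with
`(M+1)⁽ᵃ⁾ = n!/M!`; for `M < 0` both sides vanish, since `(M+1)⁽ᵃ⁾` has the factor `0`. -/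
theorem ascPochhammer_mul_multichooseInt (t : ℚ) (M : ℤ) {n a b k : ℕ} (ha : M + a = n)
    (hb : n + b = M + k) :
    (ascPochhammer ℚ k).eval (t - k) * multichooseInt t M =
      (ascPochhammer ℚ n).eval (t - k) / n ! * (ascPochhammer ℚ a).eval ((M : ℚ) + 1) *
        (ascPochhammer ℚ b).eval (t - k + n) := by
  rcases lt_or_ge M 0 with hM | hM
  · obtain ⟨j, rfl⟩ : ∃ j : ℕ, M = -(j : ℤ) - 1 := ⟨(-M - 1).toNat, by omega⟩
    have hzero : (ascPochhammer ℚ a).eval (((-(j : ℤ) - 1 : ℤ) : ℚ) + 1) = 0 := by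
      rw [show (((-(j : ℤ) - 1 : ℤ) : ℚ) + 1) = -(j : ℚ) by push_cast; ring]
      exact ascPochhammer_eval_neg_coe_nat_of_lt (by omega)
    rw [multichooseInt_of_neg t hM, hzero]
    ring
  · obtain ⟨m, rfl⟩ := Int.eq_ofNat_of_zero_le hM
    have hfac : (m ! : ℚ) * (ascPochhammer ℚ a).eval ((m : ℤ) + 1 : ℚ) = n ! := by
      rw [Int.cast_natCast, factorial_mul_ascPochhammer]
      congr
      omega
    have hrise : (ascPochhammer ℚ n).eval (t - k) * (ascPochhammer ℚ b).eval (t - k + n) =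
        (ascPochhammer ℚ k).eval (t - k) * (m ! * Ring.multichoose t m) := by
      rw [← ascPochhammer_eval_add_length, show n + b = k + m by omega,
        ascPochhammer_eval_add_length, sub_add_cancel, factorial_mul_multichoose_eq_eval]
    rw [multichooseInt_natCast]
    field_simp
    linear_combination (-(ascPochhammer ℚ k).eval (t - k) * Ring.multichoose t m) * hfac -
      (ascPochhammer ℚ a).eval ((m : ℤ) + 1 : ℚ) * hrise

section RowPolynomials

variable (t : ℚ) (r j : ℕ)

noncomputable def risingPair : ℚ[X] :=
  (ascPochhammer ℚ (r - j)).comp (X + C ((j : ℚ) + 1 - t / 2)) *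
    (ascPochhammer ℚ (r + j)).comp (X + C (t / 2 - r))

noncomputable def rowPoly : ℚ[X] :=
  risingPair t r j - (risingPair t r j).comp (-X)

theorem rowPoly_comp_neg_X : (rowPoly t r j).comp (-X) = -rowPoly t r j := by
  rw [rowPoly, sub_comp, comp_neg_X_comp_neg_X, neg_sub]

variable {r j}

theorem natDegree_rowPoly_le (hj : j ≤ r) : (rowPoly t r j).natDegree ≤ 2 * r := by
  have hpair : (risingPair t r j).natDegree ≤ 2 * r := by
    refine natDegree_mul_le.trans ?_
    simp only [natDegree_comp, ascPochhammer_natDegree, natDegree_X_add_C, mul_one]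
    omega
  refine (natDegree_sub_le _ _).trans (max_le hpair ?_)
  rwa [natDegree_comp, natDegree_neg, natDegree_X, mul_one]

/-- `A_j(±(x + t/2))` are the two products of `ascPochhammer_mul_multichooseInt` for
`M = x ± j`: the reflection `(-y)⁽ᵐ⁾ = (-1)ᵐ (y-m+1)⁽ᵐ⁾` turns one into the other. -/
theorem ascPochhammer_mul_sub_multichooseInt (x : ℤ) {n : ℕ} (hj : j ≤ r) (hn : x + r = n) :
    (ascPochhammer ℚ (2 * r)).eval (t - (2 * r : ℕ)) *
        (multichooseInt t (x + j) - multichooseInt t (x - j)) =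
      (ascPochhammer ℚ n).eval (t - (2 * r : ℕ)) / n ! * (rowPoly t r j).eval (x + t / 2) := by
  have hnq : (n : ℚ) = x + r := by exact_mod_cast hn.symm
  have hplus : (risingPair t r j).eval (x + t / 2) = (ascPochhammer ℚ (r - j)).eval
      (((x + j : ℤ) : ℚ) + 1) * (ascPochhammer ℚ (r + j)).eval (t - (2 * r : ℕ) + n) := by
    rw [risingPair, eval_mul, eval_comp, eval_comp]
    simp only [eval_add, eval_X, eval_C]
    congr 2 <;> push_cast <;> linarith
  have hminus : (risingPair t r j).eval (-(x + t / 2)) = (ascPochhammer ℚ (r + j)).eval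
      (((x - j : ℤ) : ℚ) + 1) * (ascPochhammer ℚ (r - j)).eval (t - (2 * r : ℕ) + n) := by
    rw [risingPair, eval_mul, eval_comp, eval_comp]
    simp only [eval_add, eval_X, eval_C]
    rw [ascPochhammer_eval_eq_neg_one_pow_mul (r - j) (z := t - (2 * r : ℕ) + n)
        (by push_cast [Nat.cast_sub hj]; linear_combination hnq),
      ascPochhammer_eval_eq_neg_one_pow_mul (r + j) (z := ((x - j : ℤ) : ℚ) + 1)
        (by push_cast; ring),
      ← mul_mul_mul_comm, ← pow_add, show r - j + (r + j) = 2 * r by omega, pow_mul, neg_one_sq,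
      one_pow, one_mul, mul_comm]
  rw [mul_sub, ascPochhammer_mul_multichooseInt t (x + j) (n := n) (a := r - j) (b := r + j)
      (by omega) (by omega),
    ascPochhammer_mul_multichooseInt t (x - j) (n := n) (a := r + j) (b := r - j)
      (by omega) (by omega), rowPoly, eval_sub, eval_comp, eval_neg, eval_X, hplus, hminus]
  ring

end RowPolynomials

section JacobiTrudi

variable (r : ℕ) (μ : Fin r → ℕ) (t : ℚ)

def shiftedPart (i : Fin r) : ℤ := (μ i : ℤ) - ((i : ℕ) + 1 : ℕ)

def rowPoint (i : Fin r) : ℚ := shiftedPart r μ i + t / 2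

def rowLength (i : Fin r) : ℕ := μ i + (r - ((i : ℕ) + 1))

noncomputable def rowScalar (i : Fin r) : ℚ :=
  (ascPochhammer ℚ (rowLength r μ i)).eval (t - (2 * r : ℕ)) / (rowLength r μ i)!

noncomputable def jacobiTrudiMatrix : Matrix (Fin r) (Fin r) ℚ :=
  Matrix.of fun i j =>
    multichooseInt t (shiftedPart r μ i + ((j : ℕ) + 1 : ℕ)) -
      multichooseInt t (shiftedPart r μ i - ((j : ℕ) + 1 : ℕ))

noncomputable def oddCoeffMatrix : Matrix (Fin r) (Fin r) ℚ :=
  Matrix.of fun k j => (rowPoly t r ((j : ℕ) + 1)).coeff (2 * k + 1)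

noncomputable def weylProduct : ℚ :=
  (∏ i, rowScalar r μ t i * rowPoint r μ t i) *
    ∏ i, ∏ j ∈ Ioi i, (rowPoint r μ t j ^ 2 - rowPoint r μ t i ^ 2)

theorem pow_mul_det_jacobiTrudiMatrix :
    (ascPochhammer ℚ (2 * r)).eval (t - (2 * r : ℕ)) ^ r * (jacobiTrudiMatrix r μ t).det =
      weylProduct r μ t * (oddCoeffMatrix r t).det := by
  set c := (ascPochhammer ℚ (2 * r)).eval (t - (2 * r : ℕ))
  set E : Matrix (Fin r) (Fin r) ℚ :=
    Matrix.of fun i j => (rowPoly t r ((j : ℕ) + 1)).eval (rowPoint r μ t i)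
  have hentry : (Matrix.of fun i j => c * jacobiTrudiMatrix r μ t i j) =
      Matrix.of fun i j => rowScalar r μ t i * E i j := by
    ext i j
    exact ascPochhammer_mul_sub_multichooseInt t _ (by omega)
      (by simp only [shiftedPart, rowLength]; omega)
  have hE : E.det = (∏ i, rowPoint r μ t i) *
      (∏ i, ∏ j ∈ Ioi i, (rowPoint r μ t j ^ 2 - rowPoint r μ t i ^ 2)) *
      (oddCoeffMatrix r t).det :=
    Matrix.det_eval_odd_polynomials _ (fun _ => rowPoly_comp_neg_X t r _)
      (fun j => natDegree_rowPoly_le t j.isLt) _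
  have hdet := congrArg Matrix.det hentry
  rw [Matrix.det_mul_column, prod_const, Finset.card_fin, Matrix.det_mul_column, hE] at hdet
  rw [hdet, weylProduct, prod_mul_distrib]
  ring

theorem det_jacobiTrudiMatrix_zero : (jacobiTrudiMatrix r (fun _ => 0) t).det = 1 := by
  rw [Matrix.det_of_isUpperTriangular]
  · refine prod_eq_one fun i _ => ?_
    simp only [jacobiTrudiMatrix, shiftedPart, Matrix.of_apply]
    rw [multichooseInt_of_neg t (m := ((0 : ℕ) : ℤ) - ((i : ℕ) + 1 : ℕ) - ((i : ℕ) + 1 : ℕ))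
      (by omega), sub_zero, sub_add_cancel, multichooseInt_natCast, Ring.multichoose_zero_right]
  · intro i j hij
    have : (j : ℕ) < i := hij
    simp only [jacobiTrudiMatrix, shiftedPart, Matrix.of_apply]
    rw [multichooseInt_of_neg t (by omega), multichooseInt_of_neg t (by omega), sub_zero]

theorem det_jacobiTrudiMatrix_mem_polynomialFns :
    (fun t => (jacobiTrudiMatrix r μ t).det) ∈ polynomialFns ℚ :=
  det_mem_polynomialFns _ fun _ _ =>
    sub_mem (multichooseInt_mem_polynomialFns _) (multichooseInt_mem_polynomialFns _)

theorem det_jacobiTrudiMatrix_intCast_mem_range (m : ℤ) :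
    (jacobiTrudiMatrix r μ m).det ∈ (Int.castRingHom ℚ).range :=
  Matrix.det_mem_range _ fun _ _ =>
    sub_mem (multichooseInt_intCast_mem_range _ _) (multichooseInt_intCast_mem_range _ _)

end JacobiTrudi

section WeylFormula

variable (r : ℕ) (lam : Fin r → ℕ) (t : ℚ)

def rowNum (i : Fin r) : ℚ :=
  (t / 2 + (lam i : ℚ) - ((i : ℕ) + 1)) *
    qbinom ((lam i : ℚ) + t - (r : ℚ) - ((i : ℕ) + 1) - 1) (lam i)

def rowDen (i : Fin r) : ℚ :=
  (t / 2 - ((i : ℕ) + 1)) * qbinom ((lam i : ℚ) + (r : ℚ) - ((i : ℕ) + 1)) (lam i)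

def pairNum (q : Fin r × Fin r) : ℚ :=
  ((lam q.1 : ℚ) - (lam q.2 : ℚ) + ((q.2 : ℕ) : ℚ) - ((q.1 : ℕ) : ℚ)) *
    ((lam q.1 : ℚ) + (lam q.2 : ℚ) + t - ((q.1 : ℕ) + 1) - ((q.2 : ℕ) + 1))

def pairDen (q : Fin r × Fin r) : ℚ :=
  (((q.2 : ℕ) : ℚ) - ((q.1 : ℕ) : ℚ)) * (t - ((q.1 : ℕ) + 1) - ((q.2 : ℕ) + 1))

def weylNum : ℚ :=
  (∏ i, rowNum r lam t i) *
    ∏ q ∈ univ.filter (fun q : Fin r × Fin r => q.1 < q.2), pairNum r lam t q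

def weylDen : ℚ :=
  (∏ i, rowDen r lam t i) *
    ∏ q ∈ univ.filter (fun q : Fin r × Fin r => q.1 < q.2), pairDen r t q

theorem rowScalar_mul_rowPoint_mul_rowDen (i : Fin r) :
    rowScalar r lam t i * rowPoint r lam t i * rowDen r lam t i =
      rowScalar r (fun _ => 0) t i * rowPoint r (fun _ => 0) t i * rowNum r lam t i := by
  unfold rowScalar rowPoint rowLength shiftedPart rowDen rowNum
  set l := lam i
  set n := r - ((i : ℕ) + 1)
  have hn : (n : ℚ) = r - ((i : ℕ) + 1) := by rw [Nat.cast_sub (by omega)]; push_cast; ring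
  have hden : qbinom ((l : ℚ) + r - ((i : ℕ) + 1)) l = (n + l)! / (n ! * l !) := by
    have h := factorial_mul_qbinom ((l : ℚ) + r - ((i : ℕ) + 1)) l
    rw [show (l : ℚ) + r - ((i : ℕ) + 1) - l + 1 = n + 1 by rw [hn]; ring] at h
    rw [← factorial_mul_ascPochhammer ℚ n l]
    field_simp
    linear_combination h
  have hnum : qbinom ((l : ℚ) + t - r - ((i : ℕ) + 1) - 1) l =
      (ascPochhammer ℚ l).eval (t - (2 * r : ℕ) + n) / l ! := by
    have h := factorial_mul_qbinom ((l : ℚ) + t - r - ((i : ℕ) + 1) - 1) l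
    rw [show (l : ℚ) + t - r - ((i : ℕ) + 1) - 1 - l + 1 = t - (2 * r : ℕ) + n by
      rw [hn]; push_cast; ring] at h
    field_simp
    linear_combination h
  rw [zero_add, add_comm l, ascPochhammer_eval_add_length, hden, hnum]
  field_simp
  push_cast
  ring

theorem sq_sub_sq_rowPoint_mul_pairDen (i j : Fin r) :
    (rowPoint r lam t j ^ 2 - rowPoint r lam t i ^ 2) * pairDen r t (i, j) =
      (rowPoint r (fun _ => 0) t j ^ 2 - rowPoint r (fun _ => 0) t i ^ 2) *
        pairNum r lam t (i, j) := by
  unfold rowPoint shiftedPart pairDen pairNum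
  push_cast
  ring

theorem weylProduct_mul_weylDen :
    weylProduct r lam t * weylDen r lam t = weylProduct r (fun _ => 0) t * weylNum r lam t := by
  simp only [weylProduct, weylNum, weylDen, prod_filter_fst_lt_snd]
  rw [mul_mul_mul_comm, mul_mul_mul_comm _ _ (∏ i, rowNum r lam t i)]
  simp only [← prod_mul_distrib, rowScalar_mul_rowPoint_mul_rowDen,
    sq_sub_sq_rowPoint_mul_pairDen]

theorem weylDen_ne_zero (hrow : ∀ i : Fin r, t / 2 - ((i : ℕ) + 1) ≠ 0)
    (hpair : ∀ i j : Fin r, i < j → t - ((i : ℕ) + 1) - ((j : ℕ) + 1) ≠ 0) :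
    weylDen r lam t ≠ 0 := by
  refine mul_ne_zero (prod_ne_zero_iff.mpr fun i _ => mul_ne_zero (hrow i) fun h => ?_)
    (prod_ne_zero_iff.mpr fun q hq => mul_ne_zero (fun h => ?_)
      (hpair q.1 q.2 (mem_filter.mp hq).2))
  · have hi : ((i : ℕ) : ℚ) < r := by exact_mod_cast i.isLt
    have hpos := ascPochhammer_pos (lam i) ((lam i : ℚ) + r - ((i : ℕ) + 1) - lam i + 1)
      (by linarith)
    rw [← factorial_mul_qbinom, h, mul_zero] at hpos
    exact lt_irrefl 0 hpos
  · have : ((q.1 : ℕ) : ℚ) < (q.2 : ℕ) := by exact_mod_cast (mem_filter.mp hq).2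
    linarith

theorem weylNum_mem_polynomialFns : (fun t => weylNum r lam t) ∈ polynomialFns ℚ := by
  have hrow : ∀ i, (fun t => rowNum r lam t i) ∈ polynomialFns ℚ := fun i =>
    mul_mem (mem_polynomialFns.mpr ⟨C (1 / 2) * X + C ((lam i : ℚ) - ((i : ℕ) + 1)),
        fun t => by simp only [eval_add, eval_mul, eval_C, eval_X]; ring⟩)
      (qbinom_comp_mem_polynomialFns (mem_polynomialFns.mpr
        ⟨X + C ((lam i : ℚ) - r - ((i : ℕ) + 1) - 1),
          fun t => by simp only [eval_add, eval_C, eval_X]; ring⟩) _)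
  have hpair : ∀ q, (fun t => pairNum r lam t q) ∈ polynomialFns ℚ := fun q =>
    mem_polynomialFns.mpr ⟨C ((lam q.1 : ℚ) - (lam q.2 : ℚ) + ((q.2 : ℕ) : ℚ) - ((q.1 : ℕ) : ℚ)) *
        (X + C ((lam q.1 : ℚ) + (lam q.2 : ℚ) - ((q.1 : ℕ) + 1) - ((q.2 : ℕ) + 1))),
      fun t => by simp only [pairNum, eval_add, eval_mul, eval_C, eval_X]; ring⟩
  exact mul_mem (prod_mem_polynomialFns _ fun i _ => hrow i)
    (prod_mem_polynomialFns _ fun q _ => hpair q)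

theorem weylDen_mem_polynomialFns : (fun t => weylDen r lam t) ∈ polynomialFns ℚ := by
  have hrow : ∀ i, (fun t => rowDen r lam t i) ∈ polynomialFns ℚ := fun i =>
    mem_polynomialFns.mpr ⟨(C (1 / 2) * X - C (((i : ℕ) : ℚ) + 1)) *
        C (qbinom ((lam i : ℚ) + (r : ℚ) - ((i : ℕ) + 1)) (lam i)),
      fun t => by simp only [rowDen, eval_sub, eval_mul, eval_C, eval_X]; ring⟩
  have hpair : ∀ q, (fun t => pairDen r t q) ∈ polynomialFns ℚ := fun q =>
    mem_polynomialFns.mpr ⟨C (((q.2 : ℕ) : ℚ) - ((q.1 : ℕ) : ℚ)) *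
        (X - C ((((q.1 : ℕ) : ℚ) + 1) + (((q.2 : ℕ) : ℚ) + 1))),
      fun t => by simp only [pairDen, eval_sub, eval_mul, eval_C, eval_X]; ring⟩
  exact mul_mem (prod_mem_polynomialFns _ fun i _ => hrow i)
    (prod_mem_polynomialFns _ fun q _ => hpair q)

theorem det_jacobiTrudiMatrix_mul_weylDen :
    (jacobiTrudiMatrix r lam t).det * weylDen r lam t = weylNum r lam t := by
  obtain ⟨f, hf⟩ := mem_polynomialFns.mp (show (fun t => (jacobiTrudiMatrix r lam t).det *
      weylDen r lam t - weylNum r lam t) ∈ polynomialFns ℚ from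
    sub_mem (mul_mem (det_jacobiTrudiMatrix_mem_polynomialFns r lam)
      (weylDen_mem_polynomialFns r lam)) (weylNum_mem_polynomialFns r lam))
  set c : ℚ[X] := (ascPochhammer ℚ (2 * r)).comp (X - C ((2 * r : ℕ) : ℚ))
  have hc : c ≠ 0 := ((monic_ascPochhammer ℚ _).comp (monic_X_sub_C _)
    (by rw [natDegree_X_sub_C]; exact one_ne_zero)).ne_zero
  have hcf : c ^ r * f = 0 := Polynomial.funext fun s => by
    rw [eval_mul, eval_pow, eval_comp, eval_sub, eval_X, eval_C, hf, eval_zero]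
    have hlam := pow_mul_det_jacobiTrudiMatrix r lam s
    have hzero := pow_mul_det_jacobiTrudiMatrix r (fun _ => 0) s
    rw [det_jacobiTrudiMatrix_zero, mul_one] at hzero
    linear_combination weylDen r lam s * hlam - weylNum r lam s * hzero +
      (oddCoeffMatrix r s).det * weylProduct_mul_weylDen r lam s
  have hf0 : f = 0 := (mul_eq_zero.mp hcf).resolve_left (pow_ne_zero _ hc)
  simpa [hf0, sub_eq_zero, eq_comm] using hf t

end WeylFormula

theorem stmt_3_general (r : ℕ) (lam : Fin r → ℕ) :
    ∃ p : Polynomial ℚ,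
      (∀ t : ℚ,
        (∀ i : Fin r, t / 2 - ((i : ℕ) + 1) ≠ 0) →
        (∀ i j : Fin r, i < j → t - ((i : ℕ) + 1) - ((j : ℕ) + 1) ≠ 0) →
        p.eval t =
          (∏ i : Fin r,
            ((t / 2 + (lam i : ℚ) - ((i : ℕ) + 1)) *
                qbinom ((lam i : ℚ) + t - (r : ℚ) - ((i : ℕ) + 1) - 1) (lam i)) /
              ((t / 2 - ((i : ℕ) + 1)) *
                qbinom ((lam i : ℚ) + (r : ℚ) - ((i : ℕ) + 1)) (lam i))) *
          ∏ q ∈ Finset.univ.filter (fun q : Fin r × Fin r => q.1 < q.2),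
            (((lam q.1 : ℚ) - (lam q.2 : ℚ) + ((q.2 : ℕ) : ℚ) - ((q.1 : ℕ) : ℚ)) *
                ((lam q.1 : ℚ) + (lam q.2 : ℚ) + t - ((q.1 : ℕ) + 1) - ((q.2 : ℕ) + 1))) /
              ((((q.2 : ℕ) : ℚ) - ((q.1 : ℕ) : ℚ)) *
                (t - ((q.1 : ℕ) + 1) - ((q.2 : ℕ) + 1)))) ∧
      (∀ m : ℤ, ∃ z : ℤ, p.eval (m : ℚ) = (z : ℚ)) := by
  obtain ⟨p, hp⟩ := mem_polynomialFns.mp (det_jacobiTrudiMatrix_mem_polynomialFns r lam)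
  refine ⟨p, fun t hrow hpair => ?_, fun m => ?_⟩
  · rw [hp, prod_div_distrib, prod_div_distrib, div_mul_div_comm]
    exact (eq_div_iff (weylDen_ne_zero r lam t hrow hpair)).mpr
      (det_jacobiTrudiMatrix_mul_weylDen r lam t)
  · obtain ⟨z, hz⟩ := det_jacobiTrudiMatrix_intCast_mem_range r lam m
    exact ⟨z, (hp m).trans hz.symm⟩

/-- For every partition `λ = (λ_1 ≥ … ≥ λ_r ≥ 0)`, the interpolated Weyl dimension
function
`dim X_λ(t) = ∏_{i=1}^r [(t/2+λ_i−i)·C(λ_i+t−r−i−1,λ_i)] / [(t/2−i)·C(λ_i+r−i,λ_i)]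
  · ∏_{i<j} (λ_i−λ_j+j−i)(λ_i+λ_j+t−i−j)/((j−i)(t−i−j))`
is a polynomial in `t` with rational coefficients (agreeing with the displayed rational
expression away from the poles of the denominators) which takes integer values at every
integer `t`. -/
theorem stmt_3 (r : ℕ) (lam : Fin r → ℕ) (hanti : Antitone lam) :
    ∃ p : Polynomial ℚ,
      (∀ t : ℚ,
        (∀ i : Fin r, t / 2 - ((i : ℕ) + 1) ≠ 0) →
        (∀ i j : Fin r, i < j → t - ((i : ℕ) + 1) - ((j : ℕ) + 1) ≠ 0) →
        p.eval t =
          (∏ i : Fin r,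
            ((t / 2 + (lam i : ℚ) - ((i : ℕ) + 1)) *
                qbinom ((lam i : ℚ) + t - (r : ℚ) - ((i : ℕ) + 1) - 1) (lam i)) /
              ((t / 2 - ((i : ℕ) + 1)) *
                qbinom ((lam i : ℚ) + (r : ℚ) - ((i : ℕ) + 1)) (lam i))) *
          ∏ q ∈ Finset.univ.filter (fun q : Fin r × Fin r => q.1 < q.2),
            (((lam q.1 : ℚ) - (lam q.2 : ℚ) + ((q.2 : ℕ) : ℚ) - ((q.1 : ℕ) : ℚ)) *
                ((lam q.1 : ℚ) + (lam q.2 : ℚ) + t - ((q.1 : ℕ) + 1) - ((q.2 : ℕ) + 1))) /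
              ((((q.2 : ℕ) : ℚ) - ((q.1 : ℕ) : ℚ)) *
                (t - ((q.1 : ℕ) + 1) - ((q.2 : ℕ) + 1)))) ∧
      (∀ m : ℤ, ∃ z : ℤ, p.eval (m : ℚ) = (z : ℚ)) :=
  stmt_3_general r lam
end

section
/- For partitions λ of length r and μ of length s, the function dim X_{λ,μ}(t) = d_λ d_μ ∏_{i=1}^r C(t+λ_i−i−s, λ_i)/C(λ_i+r−i, λ_i) · ∏_{j=1}^s C(t+μ_j−j−r, μ_j)/C(μ_j+s−j, μ_j) · ∏_{i=1}^r ∏_{j=1}^s (t+1+λ_i+μ_j−i−j)/(t+1−i−j), where d_λ = ∏_{1≤i<j≤r} (λ_i−λ_j+j−i)/(j−i), is a polynomial in t that takes integer values at all integers t. -/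
/-- `d_λ = ∏_{1≤i<j≤r} (λ_i−λ_j+j−i)/(j−i)`, the Weyl dimension of the irreducible
`GL_{|λ|}`-representation of highest weight `λ`. -/
def weylDim (r : ℕ) (lam : Fin r → ℕ) : ℚ :=
  ∏ q ∈ Finset.univ.filter (fun q : Fin r × Fin r => q.1 < q.2),
    ((lam q.1 : ℚ) - (lam q.2 : ℚ) + ((q.2 : ℕ) : ℚ) - ((q.1 : ℕ) : ℚ)) /
      (((q.2 : ℕ) : ℚ) - ((q.1 : ℕ) : ℚ))

/-- The interpolated Weyl dimension
`dim X_{λ,μ}(t) = d_λ d_μ ∏_i C(t+λ_i−i−s,λ_i)/C(λ_i+r−i,λ_i)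
 · ∏_j C(t+μ_j−j−r,μ_j)/C(μ_j+s−j,μ_j) · ∏_{i,j} (t+1+λ_i+μ_j−i−j)/(t+1−i−j)`. -/
def dimX (r s : ℕ) (lam : Fin r → ℕ) (mu : Fin s → ℕ) (t : ℚ) : ℚ :=
  weylDim r lam * weylDim s mu *
    (∏ i : Fin r,
      qbinom (t + (lam i : ℚ) - ((i : ℕ) + 1) - (s : ℚ)) (lam i) /
        qbinom ((lam i : ℚ) + (r : ℚ) - ((i : ℕ) + 1)) (lam i)) *
    (∏ j : Fin s,
      qbinom (t + (mu j : ℚ) - ((j : ℕ) + 1) - (r : ℚ)) (mu j) /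
        qbinom ((mu j : ℚ) + (s : ℚ) - ((j : ℕ) + 1)) (mu j)) *
    ∏ i : Fin r, ∏ j : Fin s,
      (t + 1 + (lam i : ℚ) + (mu j : ℚ) - ((i : ℕ) + 1) - ((j : ℕ) + 1)) /
        (t + 1 - ((i : ℕ) + 1) - ((j : ℕ) + 1))


/-!
At a natural number `n = r + m + s` the rational function `dim X_{λ,μ}` takes the value of
Weyl's dimension formula `∏_{p<q<n} (b_q - b_p) / (q - p)` for the `GL_n`-weight
`w = (λ, 0^m, -μ_s, …, -μ_1)`, where `b_p = p - w_p`: splitting both Vandermonde products along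
the three blocks of `w` recovers `d_λ`, `d_μ`, the binomial ratios (as rising factorials) and the
mixed product. Since the superfactorial `∏_{p<q<n} (q - p)` divides every integer Vandermonde
determinant, `dim X_{λ,μ}(n)` is an integer for all `n ≥ r + s`.

The rational function is `N / D` with `D = ∏ (t - i - j - 1)` monic. For the remainder `R` of `N`
modulo `D`, `c R(n) / D(n)` (with `c` clearing the denominators of `N / D`) is an integer for
large `n` and tends to `0`, so `R` has infinitely many roots and `D ∣ N`. Finally, a rational
polynomial with integer values at all large natural numbers has integer values on `ℤ`, since
its `(deg + 1)`-st forward difference vanishes.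
-/

open Finset Polynomial Filter Topology

theorem Finset.prod_range_prod_range_eq_prod_Ioi {M : Type*} [CommMonoid M] (n : ℕ)
    (F : ℕ → ℕ → M) :
    ∏ j ∈ range n, ∏ i ∈ range j, F i j = ∏ i : Fin n, ∏ j ∈ Ioi i, F i j := by
  have hfilter (j : ℕ) (hj : j ≤ n) : (range n).filter (· < j) = range j := by
    ext i; simp only [mem_filter, mem_range]; omega
  simp_rw [← filter_lt_eq_Ioi, prod_filter, Fin.lt_def]
  rw [Finset.prod_comm,
    Fin.prod_univ_eq_prod_range (fun j => ∏ i : Fin n, if (i : ℕ) < j then F i j else 1)]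
  refine prod_congr rfl fun j hj => ?_
  rw [Fin.prod_univ_eq_prod_range (fun i => if i < j then F i j else 1), ← prod_filter,
    hfilter j (mem_range.1 hj).le]

theorem Nat.cast_sub_one_sub {R : Type*} [Ring R] {n j : ℕ} (h : j < n) :
    ((n - 1 - j : ℕ) : R) = n - 1 - j := by
  rw [Nat.sub_sub, Nat.cast_sub (by omega), Nat.cast_add, Nat.cast_one, sub_add_eq_sub_sub]

theorem ascPochhammer_eval_eq_prod_range {R : Type*} [CommSemiring R] (n : ℕ) (x : R) :
    (ascPochhammer R n).eval x = ∏ k ∈ range n, (x + k) := by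
  induction n with
  | zero => simp
  | succ n ih => simp [ascPochhammer_succ_right, ih, prod_range_succ]

theorem ascPochhammer_eval_mul_eval_add_comm {R : Type*} [CommSemiring R] (k m : ℕ) (x : R) :
    (ascPochhammer R k).eval x * (ascPochhammer R m).eval (x + k) =
      (ascPochhammer R m).eval x * (ascPochhammer R k).eval (x + m) := by
  have h (a b : ℕ) : (ascPochhammer R a).eval x * (ascPochhammer R b).eval (x + a) =
      (ascPochhammer R (a + b)).eval x := by
    simp [← ascPochhammer_mul]
  rw [h, h, add_comm]

theorem qbinom_add_sub_one (x : ℚ) (k : ℕ) :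
    qbinom (x + k - 1) k = (ascPochhammer ℚ k).eval x / k.factorial := by
  rw [qbinom, ← descPochhammer_eval_eq_prod_range, descPochhammer_eval_eq_ascPochhammer,
    show x + k - 1 - k + 1 = x by ring]

theorem qbinom_div_qbinom {x : ℚ} (hx : 0 < x) (k m : ℕ) :
    qbinom (x + m + k - 1) k / qbinom (x + k - 1) k =
      (ascPochhammer ℚ m).eval (x + k) / (ascPochhammer ℚ m).eval x := by
  rw [qbinom_add_sub_one, qbinom_add_sub_one, div_div_div_cancel_right₀ (by positivity),
    div_eq_div_iff (ascPochhammer_pos _ _ hx).ne' (ascPochhammer_pos _ _ hx).ne']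
  linear_combination ascPochhammer_eval_mul_eval_add_comm m k x

section VandermondeProd

variable {R : Type*} [CommRing R]

def vandermondeProd (n : ℕ) (b : ℕ → R) : R :=
  ∏ j ∈ range n, ∏ i ∈ range j, (b j - b i)

theorem vandermondeProd_congr {n : ℕ} {b c : ℕ → R} (h : ∀ i < n, b i = c i) :
    vandermondeProd n b = vandermondeProd n c :=
  prod_congr rfl fun j hj => prod_congr rfl fun i hi => by
    rw [h j (mem_range.1 hj), h i ((mem_range.1 hi).trans (mem_range.1 hj))]

theorem vandermondeProd_eq_det (n : ℕ) (b : ℕ → R) :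
    vandermondeProd n b = (Matrix.vandermonde fun i : Fin n => b i).det := by
  rw [Matrix.det_vandermonde, vandermondeProd, prod_range_prod_range_eq_prod_Ioi]

theorem map_vandermondeProd {S : Type*} [CommRing S] (f : R →+* S) (n : ℕ) (b : ℕ → R) :
    f (vandermondeProd n b) = vandermondeProd n (f ∘ b) := by
  simp [vandermondeProd, map_prod]

theorem vandermondeProd_add (a c : ℕ) (b : ℕ → R) :
    vandermondeProd (a + c) b = vandermondeProd a b *
      (∏ j ∈ range c, ∏ i ∈ range a, (b (a + j) - b i)) *
        vandermondeProd c (fun j => b (a + j)) := by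
  simp only [vandermondeProd, prod_range_add, prod_mul_distrib, mul_assoc]

theorem vandermondeProd_const_add (n : ℕ) (x : R) (b : ℕ → R) :
    vandermondeProd n (fun j => x + b j) = vandermondeProd n b := by
  simp only [vandermondeProd, add_sub_add_left_eq_sub]

theorem vandermondeProd_reflect (n : ℕ) (x : R) (b : ℕ → R) :
    vandermondeProd n (fun j => x - b (n - 1 - j)) = vandermondeProd n b := by
  induction n generalizing b with
  | zero => rfl
  | succ n ih =>
    have hsub (j : ℕ) : n + 1 - 1 - (1 + j) = n - 1 - j := by omega
    have h := vandermondeProd_add 1 n (fun j => x - b (n + 1 - 1 - j))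
    rw [Nat.add_comm 1 n] at h
    simp only [hsub, ih] at h
    rw [h]
    simp only [vandermondeProd]
    rw [prod_range_succ _ n]
    simp only [prod_range_one, range_zero, prod_empty, one_mul, Nat.add_sub_cancel, Nat.sub_zero,
      sub_sub_sub_cancel_left, prod_range_reflect (fun i => b n - b i) n, mul_comm]

theorem exists_vandermondeProd_eq_int_mul (n : ℕ) (b : ℕ → ℤ) :
    ∃ z : ℤ, vandermondeProd n b = z * vandermondeProd n (fun i => (i : ℤ)) := by
  rcases n with _ | n
  · exact ⟨1, by simp [vandermondeProd]⟩
  obtain ⟨z, hz⟩ := Matrix.superFactorial_dvd_vandermonde_det fun i : Fin (n + 1) => b i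
  refine ⟨z, ?_⟩
  rw [vandermondeProd_eq_det, hz, vandermondeProd_eq_det,
    Matrix.det_vandermonde_id_eq_superFactorial, mul_comm]

end VandermondeProd

theorem vandermondeProd_natCast_ne_zero (n : ℕ) : vandermondeProd n (fun i => (i : ℚ)) ≠ 0 :=
  prod_ne_zero_iff.2 fun _ _ => prod_ne_zero_iff.2 fun _ hi =>
    sub_ne_zero.2 (Nat.cast_injective.ne ((mem_range.1 hi).ne'))

theorem vandermondeProd_natCast_sub_add {a : ℕ} {f : ℕ → ℕ} (hf : ∀ i, a ≤ i → f i = 0)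
    (m : ℕ) :
    vandermondeProd (a + m) (fun j => (j : ℚ) - f j) =
      vandermondeProd a (fun j => (j : ℚ) - f j) *
        (∏ i ∈ range a, (ascPochhammer ℚ m).eval ((a : ℚ) - i + f i)) *
          vandermondeProd m (fun j => (j : ℚ)) := by
  have hcross : ∏ j ∈ range m, ∏ i ∈ range a, (((a + j : ℕ) : ℚ) - f (a + j) - (i - f i)) =
      ∏ i ∈ range a, (ascPochhammer ℚ m).eval ((a : ℚ) - i + f i) := by
    rw [Finset.prod_comm]
    refine prod_congr rfl fun i _ => ?_
    rw [ascPochhammer_eval_eq_prod_range]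
    refine prod_congr rfl fun j _ => ?_
    rw [hf _ (Nat.le_add_right a j)]
    push_cast
    ring
  have hshift : vandermondeProd m (fun j => ((a + j : ℕ) : ℚ) - f (a + j)) =
      vandermondeProd m (fun j => (j : ℚ)) := by
    rw [← vandermondeProd_const_add m (a : ℚ) (fun j => (j : ℚ))]
    refine vandermondeProd_congr fun j _ => ?_
    rw [hf _ (Nat.le_add_right a j)]
    push_cast
    ring
  rw [vandermondeProd_add, hcross, hshift]

/-- `p ↦ p - w_p` is the `ρ`-shift of the weight `w = (f_0, …, f_{r-1}, 0^m, -g_{s-1}, …, -g_0)`. -/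
theorem vandermondeProd_mixedWeight {r s : ℕ} {f g : ℕ → ℕ} (hf : ∀ i, r ≤ i → f i = 0)
    (hg : ∀ j, s ≤ j → g j = 0) (m : ℕ) :
    vandermondeProd (r + (m + s)) (fun p => (p : ℚ) - f p + g (r + (m + s) - 1 - p)) =
      vandermondeProd r (fun i => (i : ℚ) - f i) * vandermondeProd s (fun j => (j : ℚ) - g j) *
        (∏ i ∈ range r, (ascPochhammer ℚ m).eval ((r : ℚ) - i + f i)) *
        (∏ j ∈ range s, (ascPochhammer ℚ m).eval ((s : ℚ) - j + g j)) *
        (∏ i ∈ range r, ∏ j ∈ range s, (((r + (m + s) : ℕ) : ℚ) - 1 - i - j + f i + g j)) *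
        vandermondeProd m (fun k => (k : ℚ)) := by
  set N := r + (m + s)
  have hleft : vandermondeProd r (fun p => (p : ℚ) - f p + g (N - 1 - p)) =
      vandermondeProd r (fun i => (i : ℚ) - f i) :=
    vandermondeProd_congr fun i hi => by rw [hg _ (by omega), Nat.cast_zero, add_zero]
  have hright : vandermondeProd (m + s)
      (fun k => ((r + k : ℕ) : ℚ) - f (r + k) + g (N - 1 - (r + k))) =
      vandermondeProd (s + m) (fun j => (j : ℚ) - g j) := by
    rw [add_comm m s]
    conv_rhs => rw [← vandermondeProd_reflect (s + m) ((N : ℚ) - 1)]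
    refine vandermondeProd_congr fun k hk => ?_
    rw [hf _ (by omega), show N - 1 - (r + k) = s + m - 1 - k by omega,
      Nat.cast_sub_one_sub hk]
    push_cast [N]
    ring
  have hcross : (∏ j ∈ range (m + s), ∏ i ∈ range r,
      (((r + j : ℕ) : ℚ) - f (r + j) + g (N - 1 - (r + j)) - ((i : ℚ) - f i + g (N - 1 - i)))) =
      (∏ i ∈ range r, (ascPochhammer ℚ m).eval ((r : ℚ) - i + f i)) *
        ∏ i ∈ range r, ∏ j ∈ range s, ((N : ℚ) - 1 - i - j + f i + g j) := by
    rw [prod_range_add, Finset.prod_comm, ← prod_range_reflect _ s,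
      Finset.prod_comm (s := range s)]
    simp only [ascPochhammer_eval_eq_prod_range]
    congr 1
    all_goals refine prod_congr rfl fun i hi => prod_congr rfl fun j hj => ?_
    all_goals have := mem_range.1 hi; have := mem_range.1 hj
    · rw [hf _ (by omega), hg _ (by omega), hg (N - 1 - i) (by omega)]
      push_cast
      ring
    · rw [hf _ (by omega), show N - 1 - (r + (m + (s - 1 - j))) = j by omega,
        hg (N - 1 - i) (by omega), show r + (m + (s - 1 - j)) = N - 1 - j by omega,
        Nat.cast_sub_one_sub (by omega : j < N)]
      push_cast
      ring
  rw [vandermondeProd_add, hleft, hright, hcross, vandermondeProd_natCast_sub_add hg]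
  ring

theorem Polynomial.exists_int_mul_eval_intCast (q : ℚ[X]) :
    ∃ c : ℤ, c ≠ 0 ∧ ∀ x : ℤ, ∃ w : ℤ, (c : ℚ) * q.eval (x : ℚ) = w := by
  obtain ⟨c, hc, hcq⟩ := IsLocalization.integerNormalization_spec (nonZeroDivisors ℤ) q
  refine ⟨c, nonZeroDivisors.ne_zero hc, fun x => ⟨(IsLocalization.integerNormalization
    (nonZeroDivisors ℤ) q).eval x, ?_⟩⟩
  have := congr_arg (eval (x : ℚ)) hcq
  rw [eval_smul, zsmul_eq_mul, ← eq_intCast (algebraMap ℤ ℚ) x, eval_map_algebraMap,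
    aeval_algebraMap_apply] at this
  simpa using this.symm

theorem Polynomial.eq_zero_of_eventually_eval_natCast_eq_zero {p : ℚ[X]}
    (h : ∀ᶠ n : ℕ in atTop, p.eval (n : ℚ) = 0) : p = 0 := by
  obtain ⟨n₀, hn₀⟩ := eventually_atTop.1 h
  refine eq_zero_of_infinite_isRoot p (Set.Infinite.mono ?_ (Set.infinite_range_of_injective
    (Nat.cast_injective.comp (add_right_injective n₀))))
  rintro _ ⟨k, rfl⟩
  exact hn₀ _ (Nat.le_add_right n₀ k)

theorem Polynomial.Monic.dvd_of_eventually_eval_natCast {N D : ℚ[X]} (hD : D.Monic)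
    (h : ∀ᶠ n : ℕ in atTop,
      D.eval (n : ℚ) ≠ 0 ∧ ∃ z : ℤ, N.eval (n : ℚ) = D.eval (n : ℚ) * z) :
    D ∣ N := by
  rw [← modByMonic_eq_zero_iff_dvd hD]
  set R := N %ₘ D
  obtain ⟨c, hc0, hc⟩ := exists_int_mul_eval_intCast (N /ₘ D)
  have hlim : Tendsto (fun n : ℕ => (c : ℚ) * (R.eval (n : ℚ) / D.eval (n : ℚ))) atTop (𝓝 0) := by
    simpa using ((div_tendsto_atTop_zero_of_degree_lt R D (degree_modByMonic_lt N hD)).comp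
      tendsto_natCast_atTop_atTop).const_mul (c : ℚ)
  have hsmall := hlim.eventually (Ioo_mem_nhds (neg_one_lt_zero (R := ℚ)) one_pos)
  refine eq_zero_of_eventually_eval_natCast_eq_zero ?_
  filter_upwards [h, hsmall] with n ⟨hDn, z, hz⟩ ⟨hlo, hhi⟩
  obtain ⟨w, hw⟩ := hc n
  rw [Int.cast_natCast] at hw
  have hR : (c : ℚ) * (R.eval (n : ℚ) / D.eval (n : ℚ)) = ((c * z - w : ℤ) : ℚ) := by
    rw [show R = N - D * (N /ₘ D) from modByMonic_eq_sub_mul_div N D, eval_sub, eval_mul, hz,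
      ← mul_sub, mul_div_cancel_left₀ _ hDn, mul_sub, hw]
    push_cast
    rfl
  rw [hR] at hlo hhi
  have hzero : c * z - w = 0 := by
    have := Int.cast_lt.1 (by simpa using hlo : ((-1 : ℤ) : ℚ) < ((c * z - w : ℤ) : ℚ))
    have := Int.cast_lt.1 (by simpa using hhi : ((c * z - w : ℤ) : ℚ) < ((1 : ℤ) : ℚ))
    omega
  rw [hzero, Int.cast_zero, mul_eq_zero, div_eq_zero_iff] at hR
  exact (hR.resolve_left (Int.cast_ne_zero.2 hc0)).resolve_right hDn

theorem Polynomial.exists_int_eval_intCast_of_eventually {p : ℚ[X]}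
    (h : ∀ᶠ n : ℕ in atTop, ∃ z : ℤ, p.eval (n : ℚ) = z) (m : ℤ) :
    ∃ z : ℤ, p.eval (m : ℚ) = z := by
  obtain ⟨n₀, hn₀⟩ := eventually_atTop.1 h
  set d := p.natDegree
  -- expresses `p x` through `p (x + 1), …, p (x + d + 1)` with integer coefficients
  have hdiff (x : ℚ) : ∑ k ∈ range (d + 1 + 1),
      ((-1 : ℤ) ^ (d + 1 - k) * (d + 1).choose k) • p.eval (x + k) = 0 := by
    have := congr_fun (fwdDiff_iter_eq_zero_of_degree_lt (P := p) (Nat.lt_succ_self d)) x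
    simpa [fwdDiff_iter_eq_sum_shift] using this
  suffices ∀ k : ℕ, ∀ m : ℤ, (n₀ : ℤ) - k ≤ m → p.eval (m : ℚ) ∈ (⊥ : Subring ℚ) by
    obtain ⟨z, hz⟩ := Subring.mem_bot.1 (this (n₀ - m).toNat m (by omega))
    exact ⟨z, hz.symm⟩
  intro k
  induction k with
  | zero =>
    intro m hm
    lift m to ℕ using (by omega)
    obtain ⟨z, hz⟩ := hn₀ m (by omega)
    exact Subring.mem_bot.2 ⟨z, by simpa using hz.symm⟩
  | succ k ih =>
    intro m hm
    rcases le_or_gt ((n₀ : ℤ) - k) m with hm' | hm'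
    · exact ih m hm'
    have hsum : ((-1 : ℤ) ^ (d + 1)) • p.eval (m : ℚ) = -∑ k ∈ range (d + 1),
        ((-1 : ℤ) ^ (d + 1 - (k + 1)) * (d + 1).choose (k + 1)) •
          p.eval ((m + (k + 1) : ℤ) : ℚ) := by
      have := hdiff m
      rw [sum_range_succ'] at this
      push_cast at this ⊢
      simpa [eq_neg_iff_add_eq_zero, add_comm] using this
    have hmem : ((-1 : ℤ) ^ (d + 1)) • p.eval (m : ℚ) ∈ (⊥ : Subring ℚ) := hsum ▸
      neg_mem (sum_mem fun j _ => zsmul_mem (ih _ (by omega)) _)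
    have hsign : ((-1 : ℤ) ^ (d + 1)) * (-1) ^ (d + 1) = 1 := by rw [← mul_pow]; norm_num
    simpa only [smul_smul, hsign, one_smul] using zsmul_mem hmem ((-1 : ℤ) ^ (d + 1))

def extendByZero {r : ℕ} (lam : Fin r → ℕ) (i : ℕ) : ℕ :=
  if h : i < r then lam ⟨i, h⟩ else 0

@[simp]
theorem extendByZero_val {r : ℕ} (lam : Fin r → ℕ) (i : Fin r) :
    extendByZero lam i = lam i := by
  simp [extendByZero]

theorem extendByZero_of_le {r : ℕ} (lam : Fin r → ℕ) {i : ℕ} (h : r ≤ i) :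
    extendByZero lam i = 0 :=
  dif_neg (not_lt.2 h)

theorem weylDim_eq_div (r : ℕ) (lam : Fin r → ℕ) :
    weylDim r lam = vandermondeProd r (fun i => (i : ℚ) - extendByZero lam i) /
      vandermondeProd r (fun i => (i : ℚ)) := by
  simp only [vandermondeProd, prod_range_prod_range_eq_prod_Ioi, ← prod_div_distrib]
  rw [weylDim, prod_filter, Fintype.prod_prod_type]
  simp_rw [← filter_lt_eq_Ioi, prod_filter]
  refine prod_congr rfl fun i _ => prod_congr rfl fun j _ => ?_
  split_ifs
  · simp only [extendByZero_val]; ring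
  · rfl

theorem prod_qbinom_div_qbinom {a : ℕ} (lam : Fin a → ℕ) {x : ℚ} (b m : ℕ)
    (hx : x = a + m + b) :
    ∏ i : Fin a, qbinom (x + (lam i : ℚ) - ((i : ℕ) + 1) - b) (lam i) /
        qbinom ((lam i : ℚ) + a - ((i : ℕ) + 1)) (lam i) =
      ∏ i ∈ range a, (ascPochhammer ℚ m).eval ((a : ℚ) - i + extendByZero lam i) /
        (ascPochhammer ℚ m).eval ((a : ℚ) - i) := by
  rw [prod_range]
  refine prod_congr rfl fun i _ => ?_
  have hi : (0 : ℚ) < a - i := sub_pos.2 (Nat.cast_lt.2 i.isLt)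
  rw [extendByZero_val, ← qbinom_div_qbinom hi, hx]
  congr 2 <;> ring

theorem dimX_natCast_eq (r s m : ℕ) (lam : Fin r → ℕ) (mu : Fin s → ℕ) :
    dimX r s lam mu ((r + (m + s) : ℕ) : ℚ) =
      vandermondeProd (r + (m + s))
          (fun p => (p : ℚ) - extendByZero lam p + extendByZero mu (r + (m + s) - 1 - p)) /
        vandermondeProd (r + (m + s)) (fun p => (p : ℚ)) := by
  set N := r + (m + s)
  have hzero := vandermondeProd_mixedWeight (r := r) (s := s) (f := fun _ => 0) (g := fun _ => 0)
    (fun _ _ => rfl) (fun _ _ => rfl) m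
  simp only [Nat.cast_zero, sub_zero, add_zero] at hzero
  rw [vandermondeProd_mixedWeight (fun _ => extendByZero_of_le lam)
    (fun _ => extendByZero_of_le mu), hzero,
    mul_div_mul_right _ _ (vandermondeProd_natCast_ne_zero m)]
  have hcross : ∏ i : Fin r, ∏ j : Fin s,
        (N + 1 + (lam i : ℚ) + (mu j : ℚ) - ((i : ℕ) + 1) - ((j : ℕ) + 1)) /
          (N + 1 - ((i : ℕ) + 1) - ((j : ℕ) + 1)) =
      ∏ i ∈ range r, ∏ j ∈ range s,
        ((N : ℚ) - 1 - i - j + extendByZero lam i + extendByZero mu j) / ((N : ℚ) - 1 - i - j) := by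
    rw [prod_range]
    refine prod_congr rfl fun i _ => ?_
    rw [prod_range]
    refine prod_congr rfl fun j _ => ?_
    rw [extendByZero_val, extendByZero_val]
    congr 1 <;> ring
  rw [dimX, prod_qbinom_div_qbinom lam s m (by push_cast [N]; ring),
    prod_qbinom_div_qbinom mu r m (by push_cast [N]; ring), hcross, weylDim_eq_div,
    weylDim_eq_div]
  simp only [prod_div_distrib]
  ring

theorem exists_dimX_natCast_eq_intCast {r s n : ℕ} (lam : Fin r → ℕ) (mu : Fin s → ℕ)
    (hn : r + s ≤ n) : ∃ z : ℤ, dimX r s lam mu n = z := by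
  obtain ⟨m, rfl⟩ : ∃ m, n = r + (m + s) := ⟨n - r - s, by omega⟩
  obtain ⟨z, hz⟩ := exists_vandermondeProd_eq_int_mul (r + (m + s))
    (fun p => (p : ℤ) - extendByZero lam p + extendByZero mu (r + (m + s) - 1 - p))
  have hzq := congr_arg (Int.castRingHom ℚ) hz
  rw [map_vandermondeProd, map_mul, map_vandermondeProd] at hzq
  refine ⟨z, ?_⟩
  rw [dimX_natCast_eq]
  simp only [Function.comp_def, eq_intCast, Int.cast_add, Int.cast_sub, Int.cast_natCast] at hzq
  rw [hzq, mul_div_cancel_right₀ _ (vandermondeProd_natCast_ne_zero _)]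

noncomputable def qbinomPoly (p : ℚ[X]) (k : ℕ) : ℚ[X] :=
  C ((k.factorial : ℚ)⁻¹) * (descPochhammer ℚ k).comp p

@[simp]
theorem eval_qbinomPoly (p : ℚ[X]) (k : ℕ) (t : ℚ) :
    (qbinomPoly p k).eval t = qbinom (p.eval t) k := by
  rw [qbinomPoly, qbinom, eval_mul, eval_C, eval_comp, descPochhammer_eval_eq_prod_range,
    inv_mul_eq_div]

noncomputable def dimXNum (r s : ℕ) (lam : Fin r → ℕ) (mu : Fin s → ℕ) : ℚ[X] :=
  C (weylDim r lam * weylDim s mu /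
      ((∏ i : Fin r, qbinom ((lam i : ℚ) + (r : ℚ) - ((i : ℕ) + 1)) (lam i)) *
        ∏ j : Fin s, qbinom ((mu j : ℚ) + (s : ℚ) - ((j : ℕ) + 1)) (mu j))) *
    (∏ i : Fin r,
      qbinomPoly (X + C (lam i : ℚ) - C (((i : ℕ) : ℚ) + 1) - C (s : ℚ)) (lam i)) *
    (∏ j : Fin s,
      qbinomPoly (X + C (mu j : ℚ) - C (((j : ℕ) : ℚ) + 1) - C (r : ℚ)) (mu j)) *
    ∏ i : Fin r, ∏ j : Fin s,
      (X + 1 + C (lam i : ℚ) + C (mu j : ℚ) - C (((i : ℕ) : ℚ) + 1) - C (((j : ℕ) : ℚ) + 1))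

noncomputable def dimXDen (r s : ℕ) : ℚ[X] :=
  ∏ i : Fin r, ∏ j : Fin s, (X + 1 - C (((i : ℕ) : ℚ) + 1) - C (((j : ℕ) : ℚ) + 1))

theorem eval_dimXDen (r s : ℕ) (t : ℚ) : (dimXDen r s).eval t =
    ∏ i : Fin r, ∏ j : Fin s, (t + 1 - ((i : ℕ) + 1) - ((j : ℕ) + 1)) := by
  simp [dimXDen, eval_prod]

theorem dimXDen_monic (r s : ℕ) : (dimXDen r s).Monic :=
  monic_prod_of_monic _ _ fun i _ => monic_prod_of_monic _ _ fun j _ => by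
    rw [sub_sub, add_sub_assoc, ← C_1, ← C_add, ← C_sub]
    exact monic_X_add_C _

theorem dimX_eq_eval_div (r s : ℕ) (lam : Fin r → ℕ) (mu : Fin s → ℕ) (t : ℚ) :
    dimX r s lam mu t = (dimXNum r s lam mu).eval t / (dimXDen r s).eval t := by
  simp only [dimX, dimXNum, eval_dimXDen, eval_mul, eval_C, eval_prod, eval_qbinomPoly, eval_add,
    eval_sub, eval_X, eval_one, prod_div_distrib]
  ring

theorem eval_dimXDen_natCast_ne_zero {r s n : ℕ} (hn : r + s ≤ n) :
    (dimXDen r s).eval (n : ℚ) ≠ 0 := by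
  rw [eval_dimXDen]
  refine prod_ne_zero_iff.2 fun i _ => prod_ne_zero_iff.2 fun j _ => ?_
  have : (i : ℕ) + (j : ℕ) + 2 ≤ n := by omega
  have : ((i : ℕ) + (j : ℕ) + 2 : ℚ) ≤ n := by exact_mod_cast this
  linarith

theorem stmt_4_general (r s : ℕ) (lam : Fin r → ℕ) (mu : Fin s → ℕ) :
    ∃ p : Polynomial ℚ,
      (∀ t : ℚ,
        (∀ (i : Fin r) (j : Fin s), t + 1 - ((i : ℕ) + 1) - ((j : ℕ) + 1) ≠ 0) →
        p.eval t = dimX r s lam mu t) ∧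
      (∀ m : ℤ, ∃ z : ℤ, p.eval (m : ℚ) = (z : ℚ)) := by
  have hint : ∀ᶠ n : ℕ in atTop, (dimXDen r s).eval (n : ℚ) ≠ 0 ∧ ∃ z : ℤ, dimX r s lam mu n = z :=
    (eventually_ge_atTop (r + s)).mono fun n hn =>
      ⟨eval_dimXDen_natCast_ne_zero hn, exists_dimX_natCast_eq_intCast lam mu hn⟩
  obtain ⟨p, hp⟩ : dimXDen r s ∣ dimXNum r s lam mu := by
    refine (dimXDen_monic r s).dvd_of_eventually_eval_natCast (hint.mono ?_)
    rintro n ⟨hn, z, hz⟩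
    exact ⟨hn, z, by rw [← hz, dimX_eq_eval_div, mul_div_cancel₀ _ hn]⟩
  have hp_eval (t : ℚ) (ht : (dimXDen r s).eval t ≠ 0) : p.eval t = dimX r s lam mu t := by
    rw [dimX_eq_eval_div, hp, eval_mul, mul_div_cancel_left₀ _ ht]
  refine ⟨p, fun t ht => hp_eval t ?_, exists_int_eval_intCast_of_eventually (hint.mono ?_)⟩
  · rw [eval_dimXDen]
    exact prod_ne_zero_iff.2 fun i _ => prod_ne_zero_iff.2 fun j _ => ht i j
  · rintro n ⟨hn, z, hz⟩
    exact ⟨z, (hp_eval n hn).trans hz⟩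

/-- For partitions `λ` of length `r` and `μ` of length `s`, the function
`dim X_{λ,μ}(t)` is a polynomial in `t` (agreeing with the rational expression away
from the poles `t = i + j − 1`) which takes integer values at every integer `t`. -/
theorem stmt_4 (r s : ℕ) (lam : Fin r → ℕ) (mu : Fin s → ℕ)
    (hlam : Antitone lam) (hmu : Antitone mu) :
    ∃ p : Polynomial ℚ,
      (∀ t : ℚ,
        (∀ (i : Fin r) (j : Fin s), t + 1 - ((i : ℕ) + 1) - ((j : ℕ) + 1) ≠ 0) →
        p.eval t = dimX r s lam mu t) ∧
      (∀ m : ℤ, ∃ z : ℤ, p.eval (m : ℚ) = (z : ℚ)) :=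
  stmt_4_general r s lam mu
end

section
/- For n a positive integer and partitions λ, μ with |λ| = |μ| and lengths r + s ≤ n, the specialization dim X_{λ,μ}(n) of the interpolated dimension polynomial equals the dimension of the irreducible GL_n-representation with highest weight [λ,μ]_n = (λ_1,...,λ_r, 0,...,0, −μ_s,...,−μ_1) given by the Weyl dimension formula ∏_{1≤i<j≤n} (a_i − a_j + j − i)/(j − i), where a = [λ,μ]_n. -/
/-- The extension of `λ : Fin r → ℕ` by zero to all of `ℕ` (as integers). -/
def extZ (r : ℕ) (lam : Fin r → ℕ) (k : ℕ) : ℤ :=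
  if h : k < r then (lam ⟨k, h⟩ : ℤ) else 0

/-- The highest weight `[λ,μ]_n = (λ_1,…,λ_r,0,…,0,−μ_s,…,−μ_1)` of `GL_n`. -/
def hw (r s n : ℕ) (lam : Fin r → ℕ) (mu : Fin s → ℕ) (i : Fin n) : ℤ :=
  extZ r lam i - extZ s mu (n - 1 - (i : ℕ))

/-!
Cut the positions `0, …, n-1` into the blocks `[0, r)`, `[r, n-s)` and `[n-s, n)`, on which the
weight `[λ,μ]_n` is `λ`, `0` and `-μ` reversed. The Weyl product splits into products over pairs
of blocks: the three diagonal blocks give `d_λ`, `1` and `d_μ` (the last after reflecting the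
positions), the pairs (`λ`-block, zero block) and (zero block, `μ`-block) telescope to the
quotients of binomial coefficients, and the pairs (`λ`-block, `μ`-block) give the mixed product
at `t = n`.
-/

open Finset

lemma prod_filter_fin_lt_eq_prod_range {M : Type*} [CommMonoid M] (n : ℕ) (f : ℕ → ℕ → M) :
    ∏ q ∈ univ.filter (fun q : Fin n × Fin n => q.1 < q.2), f q.1 q.2 =
      ∏ j ∈ range n, ∏ i ∈ range j, f i j := by
  rw [prod_filter, Fintype.prod_prod_type, prod_comm, ← Fin.prod_univ_eq_prod_range]
  refine prod_congr rfl fun j _ => ?_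
  have hrange : (range n).filter (· < (j : ℕ)) = range j := by
    ext i; simp only [mem_filter, mem_range]; omega
  rw [← hrange, prod_filter, ← Fin.prod_univ_eq_prod_range (fun i => if i < j then f i j else 1)]
  simp only [Fin.lt_def]

lemma qbinom_add_one_mul (x : ℚ) (k : ℕ) :
    qbinom (x + 1) k * (x + 1 - k) = qbinom x k * (x + 1) := by
  have hshift : ∏ i ∈ range k, (x + 1 - ((i + 1 : ℕ) : ℚ)) = ∏ i ∈ range k, (x - i) :=
    prod_congr rfl fun i _ => by push_cast; ring
  have hsucc := prod_range_succ (fun i : ℕ => x + 1 - i) k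
  rw [prod_range_succ', hshift] at hsucc
  simp only [qbinom, div_mul_eq_mul_div, ← hsucc]
  push_cast
  ring

lemma qbinom_natCast_pos {N k : ℕ} (h : k ≤ N) : 0 < qbinom N k :=
  div_pos (prod_pos fun i hi => by
    have : (i : ℚ) < N := by exact_mod_cast (mem_range.mp hi).trans_le h
    linarith) (by positivity)

lemma prod_range_div_eq_qbinom_div (l m N : ℕ) :
    ∏ k ∈ range N, ((l + m + k + 1 : ℚ) / (m + k + 1)) =
      qbinom (l + m + N) l / qbinom (l + m) l := by
  have hbase : qbinom (l + m) l ≠ 0 := by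
    have := qbinom_natCast_pos (N := l + m) (k := l) (by omega)
    push_cast at this
    exact this.ne'
  induction N with
  | zero => simp [div_self hbase]
  | succ N ih =>
    have hstep := qbinom_add_one_mul (l + m + N) l
    have hden : (m + N + 1 : ℚ) ≠ 0 := by positivity
    rw [prod_range_succ, ih, div_mul_div_comm, div_eq_div_iff (mul_ne_zero hbase hden) hbase]
    rw [show ((l + m + (N + 1 : ℕ) : ℚ)) = l + m + N + 1 by push_cast; ring]
    linear_combination (-qbinom (l + m) l) * hstep

def weylFactor (a : ℕ → ℚ) (i j : ℕ) : ℚ :=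
  (a i - a j + j - i) / (j - i)

def weylProd (a : ℕ → ℚ) (n : ℕ) : ℚ :=
  ∏ j ∈ range n, ∏ i ∈ range j, weylFactor a i j

lemma weylProd_congr {a b : ℕ → ℚ} {n : ℕ} (h : ∀ i < n, a i = b i) :
    weylProd a n = weylProd b n :=
  prod_congr rfl fun j hj => prod_congr rfl fun i hi => by
    have hj := mem_range.mp hj
    have hi := mem_range.mp hi
    simp only [weylFactor, h i (by omega), h j hj]

lemma weylProd_eq_one {a : ℕ → ℚ} {n : ℕ} (h : ∀ i < n, a i = 0) : weylProd a n = 1 :=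
  prod_eq_one fun j hj => prod_eq_one fun i hi => by
    have hj := mem_range.mp hj
    have hi := mem_range.mp hi
    have hij : (j - i : ℚ) ≠ 0 := sub_ne_zero.mpr (by exact_mod_cast hi.ne')
    rw [weylFactor, h i (by omega), h j hj, zero_sub_zero, zero_add, div_self hij]

lemma weylProd_add (a : ℕ → ℚ) (m k : ℕ) :
    weylProd a (m + k) =
      weylProd a m * (∏ j ∈ range k, ∏ i ∈ range m, weylFactor a i (m + j)) *
        weylProd (fun i => a (m + i)) k := by
  have hshift : ∀ i j : ℕ, weylFactor (fun i => a (m + i)) i j = weylFactor a (m + i) (m + j) :=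
    fun i j => by simp only [weylFactor]; push_cast; ring_nf
  simp only [weylProd, prod_range_add, hshift, prod_mul_distrib, mul_assoc]

lemma weylProd_reflect (a : ℕ → ℚ) (n : ℕ) :
    weylProd (fun i => -a (n - 1 - i)) n = weylProd a n := by
  simp only [weylProd, ← prod_filter_fin_lt_eq_prod_range]
  refine prod_nbij' (fun q => (q.2.rev, q.1.rev)) (fun q => (q.2.rev, q.1.rev))
    (by simp) (by simp) (by simp) (by simp) fun q _ => ?_
  have hrev : ∀ i : Fin n, ((i.rev : ℕ) : ℚ) = n - 1 - i := fun i => by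
    rw [Fin.val_rev, Nat.cast_sub (by omega)]; push_cast; ring
  have hsub : ∀ i : Fin n, n - 1 - (i : ℕ) = i.rev := fun i => by rw [Fin.val_rev]; omega
  simp only [weylFactor, hsub, hrev]
  congr 1 <;> ring

lemma extZ_fin (r : ℕ) (lam : Fin r → ℕ) (i : Fin r) : extZ r lam i = lam i := by
  simp [extZ]

lemma weylDim_eq_weylProd (r : ℕ) (lam : Fin r → ℕ) :
    weylDim r lam = weylProd (fun k => extZ r lam k) r := by
  rw [weylProd, ← prod_filter_fin_lt_eq_prod_range]
  refine prod_congr rfl fun q _ => ?_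
  simp only [weylFactor, extZ_fin, Int.cast_natCast]

lemma natCast_sub_one_sub {a b : ℕ} (h : b < a) : ((a - 1 - b : ℕ) : ℚ) = a - 1 - b := by
  rw [Nat.sub_sub, Nat.cast_sub (by omega)]; push_cast; ring

lemma extZ_of_le {r k : ℕ} (lam : Fin r → ℕ) (h : r ≤ k) : extZ r lam k = 0 :=
  dif_neg (by omega)

def hwExt (r s n : ℕ) (lam : Fin r → ℕ) (mu : Fin s → ℕ) (k : ℕ) : ℚ :=
  extZ r lam k - extZ s mu (n - 1 - k)

section hwExt

variable {r s n i : ℕ} (lam : Fin r → ℕ) (mu : Fin s → ℕ)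

lemma hwExt_of_lt (i : Fin r) (hn : i + s < n) : hwExt r s n lam mu i = lam i := by
  simp [hwExt, extZ, show ¬ n - 1 - i < s by omega]

lemma hwExt_of_le_of_lt (hr : r ≤ i) (hn : i + s < n) : hwExt r s n lam mu i = 0 := by
  simp [hwExt, extZ_of_le lam hr, extZ_of_le mu (show s ≤ n - 1 - i by omega)]

lemma hwExt_of_sub_eq (j : Fin s) (hr : r ≤ i) (hj : n - 1 - i = j) :
    hwExt r s n lam mu i = -mu j := by
  rw [hwExt, extZ_of_le lam hr]
  simp [extZ, hj]

end hwExt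

section blocks

variable {r s : ℕ} (k : ℕ) (lam : Fin r → ℕ) (mu : Fin s → ℕ)

lemma weylProd_hwExt_left : weylProd (hwExt r s (r + k + s) lam mu) r = weylDim r lam := by
  rw [weylDim_eq_weylProd]
  refine weylProd_congr fun i hi => ?_
  simp [hwExt_of_lt (n := r + k + s) lam mu ⟨i, hi⟩ (by omega), extZ, hi]

lemma weylProd_hwExt_middle : weylProd (fun i => hwExt r s (r + k + s) lam mu (r + i)) k = 1 :=
  weylProd_eq_one fun _ _ => hwExt_of_le_of_lt lam mu (by omega) (by omega)

lemma weylProd_hwExt_right :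
    weylProd (fun i => hwExt r s (r + k + s) lam mu (r + k + i)) s = weylDim s mu := by
  rw [weylDim_eq_weylProd, ← weylProd_reflect fun j => (extZ s mu j : ℚ)]
  refine weylProd_congr fun i hi => ?_
  rw [hwExt_of_sub_eq (n := r + k + s) lam mu ⟨s - 1 - i, by omega⟩ (by omega) (by dsimp only; omega)]
  simp [extZ, show s - 1 - i < s by omega]

lemma prod_weylFactor_hwExt_left_middle :
    ∏ j ∈ range k, ∏ i ∈ range r, weylFactor (hwExt r s (r + k + s) lam mu) i (r + j) =
      ∏ i : Fin r, qbinom (((r + k + s : ℕ) : ℚ) + lam i - ((i : ℕ) + 1) - s) (lam i) /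
        qbinom (lam i + r - ((i : ℕ) + 1)) (lam i) := by
  rw [prod_comm, ← Fin.prod_univ_eq_prod_range]
  refine prod_congr rfl fun i _ => ?_
  have hi := i.isLt
  calc ∏ j ∈ range k, weylFactor (hwExt r s (r + k + s) lam mu) i (r + j)
      = ∏ j ∈ range k, ((lam i + (r - 1 - i : ℕ) + j + 1 : ℚ) / ((r - 1 - i : ℕ) + j + 1)) :=
        prod_congr rfl fun j hj => by
          have hj := mem_range.mp hj
          rw [weylFactor, hwExt_of_lt lam mu i (by omega),
            hwExt_of_le_of_lt lam mu (by omega) (by omega), natCast_sub_one_sub hi]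
          push_cast
          ring_nf
    _ = _ := by
      rw [prod_range_div_eq_qbinom_div, natCast_sub_one_sub hi]
      congr 2 <;> push_cast <;> ring

lemma prod_weylFactor_hwExt_left_right :
    ∏ j ∈ range s, ∏ i ∈ range r, weylFactor (hwExt r s (r + k + s) lam mu) i (r + k + j) =
      ∏ i : Fin r, ∏ j : Fin s,
        (((r + k + s : ℕ) : ℚ) + 1 + lam i + mu j - ((i : ℕ) + 1) - ((j : ℕ) + 1)) /
          (((r + k + s : ℕ) : ℚ) + 1 - ((i : ℕ) + 1) - ((j : ℕ) + 1)) := by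
  rw [← prod_range_reflect, prod_comm, ← Fin.prod_univ_eq_prod_range]
  refine prod_congr rfl fun i _ => ?_
  rw [← Fin.prod_univ_eq_prod_range]
  refine prod_congr rfl fun j _ => ?_
  have hi := i.isLt
  have hj := j.isLt
  rw [weylFactor, hwExt_of_lt lam mu i (by omega),
    hwExt_of_sub_eq lam mu j (by omega) (by omega)]
  push_cast [natCast_sub_one_sub hj]
  ring_nf

lemma prod_weylFactor_hwExt_middle_right :
    ∏ j ∈ range s, ∏ i ∈ range k, weylFactor (hwExt r s (r + k + s) lam mu) (r + i) (r + k + j) =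
      ∏ j : Fin s, qbinom (((r + k + s : ℕ) : ℚ) + mu j - ((j : ℕ) + 1) - r) (mu j) /
        qbinom (mu j + s - ((j : ℕ) + 1)) (mu j) := by
  rw [← prod_range_reflect, ← Fin.prod_univ_eq_prod_range]
  refine prod_congr rfl fun j _ => ?_
  have hj := j.isLt
  calc ∏ i ∈ range k, weylFactor (hwExt r s (r + k + s) lam mu) (r + i) (r + k + (s - 1 - j))
      = ∏ i ∈ range k, ((mu j + (s - 1 - j : ℕ) + i + 1 : ℚ) / ((s - 1 - j : ℕ) + i + 1)) := by
        rw [← prod_range_reflect]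
        refine prod_congr rfl fun i hi => ?_
        have hi := mem_range.mp hi
        rw [weylFactor, hwExt_of_le_of_lt lam mu (by omega) (by omega),
          hwExt_of_sub_eq lam mu j (by omega) (by omega)]
        push_cast [natCast_sub_one_sub hj, natCast_sub_one_sub hi]
        ring_nf
    _ = _ := by
      rw [prod_range_div_eq_qbinom_div, natCast_sub_one_sub hj]
      congr 2 <;> push_cast <;> ring

end blocks

lemma prod_hw_eq_weylProd (r s n : ℕ) (lam : Fin r → ℕ) (mu : Fin s → ℕ) :
    ∏ q ∈ Finset.univ.filter (fun q : Fin n × Fin n => q.1 < q.2),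
        ((hw r s n lam mu q.1 : ℚ) - (hw r s n lam mu q.2 : ℚ) +
            ((q.2 : ℕ) : ℚ) - ((q.1 : ℕ) : ℚ)) /
          (((q.2 : ℕ) : ℚ) - ((q.1 : ℕ) : ℚ)) =
      weylProd (hwExt r s n lam mu) n := by
  rw [weylProd, ← prod_filter_fin_lt_eq_prod_range]
  simp only [weylFactor, hwExt, hw, Int.cast_sub]

theorem stmt_5_general (r s n : ℕ) (lam : Fin r → ℕ) (mu : Fin s → ℕ)
    (hn : r + s ≤ n) :
    dimX r s lam mu (n : ℚ) =
      ∏ q ∈ Finset.univ.filter (fun q : Fin n × Fin n => q.1 < q.2),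
        ((hw r s n lam mu q.1 : ℚ) - (hw r s n lam mu q.2 : ℚ) +
            ((q.2 : ℕ) : ℚ) - ((q.1 : ℕ) : ℚ)) /
          (((q.2 : ℕ) : ℚ) - ((q.1 : ℕ) : ℚ)) := by
  obtain ⟨k, rfl⟩ : ∃ k, n = r + k + s := ⟨n - r - s, by omega⟩
  rw [prod_hw_eq_weylProd, weylProd_add, weylProd_add, weylProd_hwExt_left,
    weylProd_hwExt_middle, weylProd_hwExt_right, prod_weylFactor_hwExt_left_middle]
  simp only [prod_range_add, prod_mul_distrib]
  rw [prod_weylFactor_hwExt_left_right, prod_weylFactor_hwExt_middle_right, dimX]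
  ring

/-- For a positive integer `n` and partitions `λ`, `μ` with `|λ| = |μ|` and
`r + s ≤ n`, the specialization `dim X_{λ,μ}(n)` of the interpolated dimension
polynomial equals the Weyl dimension `∏_{1≤i<j≤n} (a_i−a_j+j−i)/(j−i)` of the
irreducible `GL_n`-representation with highest weight `a = [λ,μ]_n`. -/
theorem stmt_5 (r s n : ℕ) (lam : Fin r → ℕ) (mu : Fin s → ℕ)
    (hlam : Antitone lam) (hmu : Antitone mu)
    (hsize : ∑ i, lam i = ∑ j, mu j) (hn : r + s ≤ n) (hpos : 0 < n) :
    dimX r s lam mu (n : ℚ) =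
      ∏ q ∈ Finset.univ.filter (fun q : Fin n × Fin n => q.1 < q.2),
        ((hw r s n lam mu q.1 : ℚ) - (hw r s n lam mu q.2 : ℚ) +
            ((q.2 : ℕ) : ℚ) - ((q.1 : ℕ) : ℚ)) /
          (((q.2 : ℕ) : ℚ) - ((q.1 : ℕ) : ℚ)) :=
  stmt_5_general r s n lam mu hn
end

section
/- Let C_{λ,n}(q) = q^{(λ,λ)/2} ∏_{α>0} (1 − q^{(λ+ρ,α)}) / ∏_{j≥1} (1−q^j)^{n−1} for a dominant weight λ of sl_n in the root lattice. Then for fixed partitions λ, μ with |λ|=|μ|, of lengths r, s, as n → ∞ the coefficients C_{[λ,μ]_n, n}(q) converge coefficientwise (as formal power series in q) to C_{λ,μ,∞}(q) = q^{(λ²+μ²)/2} ∏_{j≥2}(1−q^j)^{−(j−1)} ∏_{1≤i<j≤r} (1−q^{λ_i−λ_j+j−i})/(1−q^{j−i}) ∏_{1≤i<j≤s} (1−q^{μ_i−μ_j+j−i})/(1−q^{j−i}) ∏_{i=1}^r ∏_{k=0}^{λ_i−1}(1−q^{r+1+k−i})^{−1} ∏_{i=1}^s ∏_{k=0}^{μ_i−1}(1−q^{s+1+k−i})^{−1},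 where λ² = ∑λ_i² and μ² = ∑μ_i². -/
namespace Stmt10

open PowerSeries

/-- Extension of `λ : Fin r → ℕ` by zero (as integers). -/
def extZ (r : ℕ) (lam : Fin r → ℕ) (k : ℕ) : ℤ :=
  if h : k < r then (lam ⟨k, h⟩ : ℤ) else 0

/-- The `sl_n`-weight `[λ,μ]_n = (λ_1,…,λ_r,0,…,0,−μ_s,…,−μ_1)`. -/
def hw (r s n : ℕ) (lam : Fin r → ℕ) (mu : Fin s → ℕ) (i : Fin n) : ℤ :=
  extZ r lam i - extZ s mu (n - 1 - (i : ℕ))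

/-- `C_{[λ,μ]_n, n}(q) = q^{(a,a)/2} ∏_{1≤i<j≤n} (1−q^{a_i−a_j+j−i}) / ∏_{j≥1}(1−q^j)^{n−1}`
for `a = [λ,μ]_n`, with the infinite product in the denominator truncated at level `d`
(which does not change the coefficients of `q^e` for `e ≤ d`). -/
noncomputable def Cn (r s : ℕ) (lam : Fin r → ℕ) (mu : Fin s → ℕ) (n d : ℕ) :
    PowerSeries ℚ :=
  (PowerSeries.X : PowerSeries ℚ) ^ ((∑ i : Fin n, (hw r s n lam mu i) ^ 2).toNat / 2) *
    (∏ q ∈ Finset.univ.filter (fun q : Fin n × Fin n => q.1 < q.2),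
      (1 - (PowerSeries.X : PowerSeries ℚ) ^
        ((hw r s n lam mu q.1 - hw r s n lam mu q.2 + ((q.2 : ℕ) : ℤ) - ((q.1 : ℕ) : ℤ)).toNat))) *
    ((∏ j ∈ Finset.Icc 1 d, (1 - (PowerSeries.X : PowerSeries ℚ) ^ j))⁻¹) ^ (n - 1)

/-- The stable limit
`C_{λ,μ,∞}(q) = q^{(λ²+μ²)/2} ∏_{j≥2}(1−q^j)^{−(j−1)}
  ∏_{1≤i<j≤r} (1−q^{λ_i−λ_j+j−i})/(1−q^{j−i}) ∏_{1≤i<j≤s} (1−q^{μ_i−μ_j+j−i})/(1−q^{j−i})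
  ∏_{i=1}^r ∏_{k=0}^{λ_i−1} (1−q^{r+1+k−i})^{−1} ∏_{i=1}^s ∏_{k=0}^{μ_i−1} (1−q^{s+1+k−i})^{−1}`,
with the infinite product `∏_{j≥2}` truncated at level `d` (which does not change the
coefficients of `q^e` for `e ≤ d`). -/
noncomputable def Cinf (r s : ℕ) (lam : Fin r → ℕ) (mu : Fin s → ℕ) (d : ℕ) :
    PowerSeries ℚ :=
  (PowerSeries.X : PowerSeries ℚ) ^ ((∑ i, (lam i) ^ 2 + ∑ j, (mu j) ^ 2) / 2) *
    (∏ j ∈ Finset.Icc 2 d, ((1 - (PowerSeries.X : PowerSeries ℚ) ^ j)⁻¹) ^ (j - 1)) *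
    (∏ q ∈ Finset.univ.filter (fun q : Fin r × Fin r => q.1 < q.2),
      (1 - (PowerSeries.X : PowerSeries ℚ) ^ (lam q.1 - lam q.2 + ((q.2 : ℕ) - (q.1 : ℕ)))) *
        (1 - (PowerSeries.X : PowerSeries ℚ) ^ ((q.2 : ℕ) - (q.1 : ℕ)))⁻¹) *
    (∏ q ∈ Finset.univ.filter (fun q : Fin s × Fin s => q.1 < q.2),
      (1 - (PowerSeries.X : PowerSeries ℚ) ^ (mu q.1 - mu q.2 + ((q.2 : ℕ) - (q.1 : ℕ)))) *
        (1 - (PowerSeries.X : PowerSeries ℚ) ^ ((q.2 : ℕ) - (q.1 : ℕ)))⁻¹) *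
    (∏ i : Fin r, ∏ k ∈ Finset.range (lam i),
      (1 - (PowerSeries.X : PowerSeries ℚ) ^ (r + k - (i : ℕ)))⁻¹) *
    (∏ i : Fin s, ∏ k ∈ Finset.range (mu i),
      (1 - (PowerSeries.X : PowerSeries ℚ) ^ (s + k - (i : ℕ)))⁻¹)

/-!
Clear the denominators of `C_{λ,μ,∞}` and work modulo `X ^ (d + 1)`, where every factor
`1 - X ^ e` with `e > d` becomes `1`. The pairs `i < j` of `a = [λ,μ]_n` fall into four
blocks: pairs starting in the `λ`-part and ending before the `μ`-part; pairs ending in the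
`μ`-part and starting after the `λ`-part; pairs inside the central run of zeros; and pairs
from the `λ`-part to the `μ`-part, whose exponents exceed `d`. Reversing the indices,
`k ↦ -a (n - 1 - k)` is `[μ,λ]_n`, so the second block is the first one for `μ`. In row `i`
of the first block the factors `1 - X ^ (λ_i + j - i)` complete the `i`-th rows of
`∏_{i<j} (1 - X ^ (j - i))` and of the content product `∏_k (1 - X ^ (r + k - i))` to
`(X;X)_{λ_i + n - s - 1 - i}`, which is `(X;X)_d` modulo `X ^ (d + 1)`. The zeros contribute
`∏_{L < n - r - s} (X;X)_L`, which together with `∏_{j ≤ d} (1 - X ^ j) ^ (j - 1)` gives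
`(X;X)_d ^ (n - r - s)`. Both sides thus become the numerators of `C_{λ,μ,∞}` times
`(X;X)_d ^ n`.
-/

open Finset

noncomputable section

section Truncation

variable {R : Type*} [CommRing R]

abbrev modXPow (d : ℕ) : R⟦X⟧ →+* R⟦X⟧ ⧸ Ideal.span {(X : R⟦X⟧) ^ (d + 1)} :=
  Ideal.Quotient.mk _

theorem modXPow_eq_iff {d : ℕ} {A B : R⟦X⟧} :
    modXPow d A = modXPow d B ↔ X ^ (d + 1) ∣ A - B := by
  rw [Ideal.Quotient.eq, Ideal.mem_span_singleton]

theorem coeff_eq_of_modXPow_eq {d : ℕ} {A B : R⟦X⟧} (h : modXPow d A = modXPow d B) :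
    coeff d A = coeff d B := by
  have := X_pow_dvd_iff.mp (modXPow_eq_iff.mp h) d (by omega)
  rwa [map_sub, sub_eq_zero] at this

theorem modXPow_one_sub_X_pow {d e : ℕ} (h : d < e) : modXPow d (1 - X ^ e : R⟦X⟧) = 1 := by
  rw [← map_one (modXPow d), modXPow_eq_iff, sub_sub_cancel_left, dvd_neg]
  exact pow_dvd_pow X h

theorem isUnit_one_sub_X_pow {e : ℕ} (he : e ≠ 0) :
    IsUnit (1 - X ^ e : R⟦X⟧) :=
  isUnit_iff_constantCoeff.mpr (by simp [zero_pow he])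

theorem inv_mul_cancel_of_isUnit {K : Type*} [Field K] {φ : K⟦X⟧} (h : IsUnit φ) : φ⁻¹ * φ = 1 :=
  PowerSeries.inv_mul_cancel _ (isUnit_iff_constantCoeff.mp h).ne_zero

end Truncation

section QPochhammer

variable {R : Type*} [CommRing R]

def qPoch (K : ℕ) : R⟦X⟧ := ∏ j ∈ Icc 1 K, (1 - X ^ j)

theorem qPoch_succ (K : ℕ) : (qPoch (K + 1) : R⟦X⟧) = qPoch K * (1 - X ^ (K + 1)) :=
  prod_Icc_succ_top (by omega) _

theorem qPoch_add (a l : ℕ) :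
    (qPoch (a + l) : R⟦X⟧) = qPoch a * ∏ k ∈ range l, (1 - X ^ (a + k + 1)) := by
  induction l with
  | zero => simp
  | succ l ih => rw [← add_assoc, qPoch_succ, ih, prod_range_succ, mul_assoc, add_right_comm]

theorem prod_Ioo_one_sub_X_pow_sub (i m : ℕ) :
    ∏ j ∈ Ioo i m, (1 - X ^ (j - i) : R⟦X⟧) = qPoch (m - 1 - i) := by
  rw [← Ico_add_one_left_eq_Ioo, prod_Ico_eq_prod_range, ← zero_add (m - 1 - i), qPoch_add,
    qPoch, Icc_eq_empty_of_lt one_pos, prod_empty, one_mul, show m - (i + 1) = m - 1 - i by omega]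
  exact prod_congr rfl fun k _ => by rw [show i + 1 + k - i = 0 + k + 1 by omega]

theorem modXPow_qPoch_of_le {d K : ℕ} (h : d ≤ K) :
    modXPow d (qPoch K : R⟦X⟧) = modXPow d (qPoch d) := by
  obtain ⟨l, rfl⟩ := Nat.exists_eq_add_of_le h
  rw [qPoch_add, map_mul, map_prod,
    prod_eq_one fun k _ => modXPow_one_sub_X_pow (by omega), mul_one]

theorem modXPow_prod_qPoch {ι : Type*} {d : ℕ} (S : Finset ι) (g : ι → ℕ)
    (h : ∀ i ∈ S, d ≤ g i) :
    modXPow d (∏ i ∈ S, (qPoch (g i) : R⟦X⟧)) = modXPow d (qPoch d) ^ S.card := by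
  rw [map_prod, prod_congr rfl fun i hi => modXPow_qPoch_of_le (h i hi), prod_const]

def stableDen (d : ℕ) : R⟦X⟧ := ∏ j ∈ Icc 2 d, (1 - X ^ j) ^ (j - 1)

theorem stableDen_succ (d : ℕ) :
    (stableDen (d + 1) : R⟦X⟧) = stableDen d * (1 - X ^ (d + 1)) ^ d := by
  cases d with
  | zero => simp [stableDen]
  | succ d => exact prod_Icc_succ_top (by omega) _

theorem prod_range_qPoch_mul_stableDen_mul_qPoch (d : ℕ) :
    (∏ L ∈ range d, qPoch L) * stableDen d * qPoch d = (qPoch d ^ d : R⟦X⟧) := by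
  induction d with
  | zero => simp [stableDen, qPoch]
  | succ d ih =>
    rw [prod_range_succ, stableDen_succ, qPoch_succ, mul_pow]
    linear_combination (qPoch d * (1 - X ^ (d + 1)) ^ (d + 1) : R⟦X⟧) * ih

theorem modXPow_prod_range_qPoch_mul {d K : ℕ} (h : d ≤ K) :
    modXPow d ((∏ L ∈ range K, qPoch L) * stableDen d * qPoch d : R⟦X⟧)
      = modXPow d (qPoch d) ^ K := by
  have split : (∏ L ∈ range K, qPoch L) * stableDen d * qPoch d
      = qPoch d ^ d * ∏ L ∈ Ico d K, (qPoch L : R⟦X⟧) := by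
    rw [← prod_range_mul_prod_Ico _ h, ← prod_range_qPoch_mul_stableDen_mul_qPoch]
    ring
  rw [split, map_mul, map_pow, modXPow_prod_qPoch _ _ fun L hL => (mem_Ico.mp hL).1,
    Nat.card_Ico, ← pow_add, Nat.add_sub_cancel' h]

end QPochhammer

section WeylProduct

variable {R : Type*} [CommRing R]

theorem prod_filter_fin_lt {M : Type*} [CommMonoid M] (n : ℕ) (F : ℕ → ℕ → M) :
    ∏ q ∈ univ.filter (fun q : Fin n × Fin n => q.1 < q.2), F q.1 q.2
      = ∏ i ∈ range n, ∏ j ∈ Ioo i n, F i j := by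
  rw [prod_finset_product' _ univ (fun i => Ioi i) (by simp) (f := fun i j : Fin n => F i j),
    ← Fin.prod_univ_eq_prod_range (fun i => ∏ j ∈ Ioo i n, F i j)]
  refine prod_congr rfl fun i _ => ?_
  rw [← Fin.map_valEmbedding_Ioi, prod_map]
  rfl

/-- `1 - X ^ (a + ρ, α_ij)` for the positive root `α_ij = e_i - e_j`. -/
def rootFactor (a : ℕ → ℤ) (i j : ℕ) : R⟦X⟧ := 1 - X ^ (a i - a j + j - i).toNat

def weylProd (a : ℕ → ℤ) (S : Finset ℕ) (m : ℕ) : R⟦X⟧ :=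
  ∏ i ∈ S, ∏ j ∈ Ioo i m, rootFactor a i j

theorem weylProd_congr {a b : ℕ → ℤ} {S : Finset ℕ} {lo m : ℕ} (hS : ∀ i ∈ S, lo ≤ i)
    (h : Set.EqOn a b (Set.Ico lo m)) : (weylProd a S m : R⟦X⟧) = weylProd b S m := by
  refine prod_congr rfl fun i hi => prod_congr rfl fun j hj => ?_
  have hij := mem_Ioo.mp hj
  have hi' := hS i hi
  rw [rootFactor, rootFactor, h ⟨hi', by omega⟩, h ⟨by omega, hij.2⟩]

theorem weylProd_range_eq_mul_Ico (a : ℕ → ℤ) {p n m : ℕ} (h : p ≤ n) :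
    (weylProd a (range n) m : R⟦X⟧) = weylProd a (range p) m * weylProd a (Ico p n) m :=
  (prod_range_mul_prod_Ico _ h).symm

theorem weylProd_range_eq_blocks (a : ℕ → ℤ) {r m n : ℕ} (hrm : r ≤ m) (hmn : m ≤ n) :
    (weylProd a (range n) n : R⟦X⟧)
      = weylProd a (range r) m * (∏ i ∈ range r, ∏ j ∈ Ico m n, rootFactor a i j)
        * weylProd a (Ico r n) n := by
  rw [weylProd_range_eq_mul_Ico a (hrm.trans hmn)]
  congr 1
  unfold weylProd
  rw [← prod_mul_distrib]
  refine prod_congr rfl fun i hi => ?_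
  rw [← Ico_add_one_left_eq_Ioo, ← Ico_add_one_left_eq_Ioo,
    prod_Ico_consecutive _ (by simp at hi; omega) hmn]

theorem weylProd_Ico_eq_reflect (a : ℕ → ℤ) (lo n : ℕ) :
    (weylProd a (Ico lo n) n : R⟦X⟧)
      = weylProd (fun k => -a (n - 1 - k)) (range (n - lo)) (n - lo) := by
  unfold weylProd
  rw [← prod_finset_product' ((Ico lo n ×ˢ Ico lo n).filter fun p => p.1 < p.2) _ _
      (by intro p; simp only [mem_filter, mem_product, mem_Ico, mem_Ioo]; omega),
    ← prod_finset_product' ((range (n - lo) ×ˢ range (n - lo)).filter fun p => p.1 < p.2) _ _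
      (by intro p; simp only [mem_filter, mem_product, mem_range, mem_Ioo]; omega)]
  refine prod_nbij' (fun p => (n - 1 - p.2, n - 1 - p.1)) (fun p => (n - 1 - p.2, n - 1 - p.1))
    ?_ ?_ ?_ ?_ ?_ <;> simp only [mem_filter, mem_product, mem_Ico, mem_range, Prod.forall,
      Prod.mk.injEq, and_imp]
  · omega
  · omega
  · omega
  · omega
  · intro i j _ _ _ hjn hij
    rw [rootFactor, rootFactor, show n - 1 - (n - 1 - i) = i by omega,
      show n - 1 - (n - 1 - j) = j by omega]
    congr 3
    omega

theorem weylProd_zero_Ico (s M : ℕ) :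
    (weylProd 0 (Ico s M) M : R⟦X⟧) = ∏ L ∈ range (M - s), qPoch L := by
  have hrow : ∀ i, ∏ j ∈ Ioo i M, rootFactor 0 i j = (qPoch (M - 1 - i) : R⟦X⟧) := fun i => by
    rw [← prod_Ioo_one_sub_X_pow_sub]
    refine prod_congr rfl fun j hj => ?_
    rw [rootFactor, Pi.zero_apply, Pi.zero_apply, sub_zero, zero_add,
      show (j : ℤ) - i = ((j - i : ℕ) : ℤ) by have := (mem_Ioo.mp hj).1; omega, Int.toNat_natCast]
  rw [weylProd, prod_congr rfl fun i _ => hrow i, prod_Ico_eq_prod_range,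
    ← prod_range_reflect]
  exact prod_congr rfl fun k hk => by rw [show M - 1 - (s + (M - s - 1 - k)) = k by
    simp at hk; omega]

end WeylProduct

section Partition

variable {R : Type*} [CommRing R] {r : ℕ} {lam : Fin r → ℕ}

def extN (r : ℕ) (lam : Fin r → ℕ) (k : ℕ) : ℕ := if h : k < r then lam ⟨k, h⟩ else 0

theorem extZ_eq_extN (k : ℕ) : extZ r lam k = extN r lam k := by
  unfold extZ extN
  split_ifs <;> rfl

theorem extN_val (i : Fin r) : extN r lam i = lam i := dif_pos i.isLt

theorem extN_of_le {k : ℕ} (h : r ≤ k) : extN r lam k = 0 := dif_neg (by omega)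

theorem extZ_of_le {k : ℕ} (h : r ≤ k) : extZ r lam k = 0 := by
  rw [extZ_eq_extN, extN_of_le h, Nat.cast_zero]

theorem extN_antitone (hlam : Antitone lam) : Antitone (extN r lam) := by
  intro i j hij
  unfold extN
  split_ifs with hj hi
  · exact hlam (Fin.mk_le_mk.mpr hij)
  · omega
  · exact Nat.zero_le _
  · exact le_rfl

variable (r lam) in
def weylNum : R⟦X⟧ :=
  ∏ q ∈ univ.filter (fun q : Fin r × Fin r => q.1 < q.2),
    (1 - X ^ (lam q.1 - lam q.2 + ((q.2 : ℕ) - (q.1 : ℕ))))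

variable (r) in
def weylDen : R⟦X⟧ :=
  ∏ q ∈ univ.filter (fun q : Fin r × Fin r => q.1 < q.2), (1 - X ^ ((q.2 : ℕ) - (q.1 : ℕ)))

variable (r lam) in
def contentProd : R⟦X⟧ := ∏ i : Fin r, ∏ k ∈ range (lam i), (1 - X ^ (r + k - (i : ℕ)))

theorem weylNum_eq : (weylNum r lam : R⟦X⟧)
    = ∏ i ∈ range r, ∏ j ∈ Ioo i r, (1 - X ^ (extN r lam i - extN r lam j + (j - i))) := by
  rw [weylNum, ← prod_filter_fin_lt r fun i j => 1 - X ^ (extN r lam i - extN r lam j + (j - i))]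
  simp only [extN_val]

theorem weylDen_eq : (weylDen r : R⟦X⟧) = ∏ i ∈ range r, qPoch (r - 1 - i) := by
  rw [weylDen, prod_filter_fin_lt r fun i j => 1 - X ^ (j - i)]
  exact prod_congr rfl fun i _ => prod_Ioo_one_sub_X_pow_sub i r

theorem contentProd_eq : (contentProd r lam : R⟦X⟧)
    = ∏ i ∈ range r, ∏ k ∈ range (extN r lam i), (1 - X ^ (r + k - i)) := by
  rw [contentProd, ← Fin.prod_univ_eq_prod_range fun i => ∏ k ∈ range (extN r lam i), _]
  simp only [extN_val]

theorem weylDen_mul_contentProd_mul_weylProd (hlam : Antitone lam) {m : ℕ} (hrm : r ≤ m) :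
    weylDen r * contentProd r lam * weylProd (extZ r lam) (range r) m
      = (weylNum r lam * ∏ i ∈ range r, qPoch (extN r lam i + m - 1 - i) : R⟦X⟧) := by
  rw [weylDen_eq, contentProd_eq, weylNum_eq, weylProd, ← prod_mul_distrib, ← prod_mul_distrib,
    ← prod_mul_distrib]
  refine prod_congr rfl fun i hi => ?_
  have hir : i < r := mem_range.mp hi
  have hnum : ∏ j ∈ Ioo i r, rootFactor (extZ r lam) i j
      = ∏ j ∈ Ioo i r, (1 - X ^ (extN r lam i - extN r lam j + (j - i)) : R⟦X⟧) := by
    refine prod_congr rfl fun j hj => ?_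
    have hij := (mem_Ioo.mp hj).1
    have hlj := extN_antitone hlam hij.le
    rw [rootFactor, extZ_eq_extN, extZ_eq_extN]
    congr 2
    omega
  have hcross : ∏ j ∈ Ico r m, rootFactor (extZ r lam) i j
      = ∏ k ∈ range (m - r), (1 - X ^ (r - 1 - i + extN r lam i + k + 1) : R⟦X⟧) := by
    rw [prod_Ico_eq_prod_range]
    refine prod_congr rfl fun k _ => ?_
    rw [rootFactor, extZ_eq_extN, extZ_eq_extN, extN_of_le (k := r + k) (by omega)]
    congr 2
    omega
  have hcontent : qPoch (r - 1 - i) * ∏ k ∈ range (extN r lam i), (1 - X ^ (r + k - i))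
      = (qPoch (r - 1 - i + extN r lam i) : R⟦X⟧) := by
    rw [qPoch_add]
    exact congrArg _ (prod_congr rfl fun k _ => by rw [show r + k - i = r - 1 - i + k + 1 by omega])
  rw [← Ico_add_one_left_eq_Ioo, ← prod_Ico_consecutive _ (show i + 1 ≤ r by omega) hrm,
    Ico_add_one_left_eq_Ioo, hnum, hcross, hcontent,
    show extN r lam i + m - 1 - i = r - 1 - i + extN r lam i + (m - r) by omega,
    qPoch_add (r - 1 - i + extN r lam i)]
  ring

end Partition

section Weight

variable {R : Type*} [CommRing R] {r s n : ℕ} {lam : Fin r → ℕ} {mu : Fin s → ℕ}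

theorem sum_range_extZ_sq (h : r ≤ n) :
    ∑ k ∈ range n, extZ r lam k ^ 2 = ((∑ i, lam i ^ 2 : ℕ) : ℤ) := by
  rw [← sum_range_add_sum_Ico _ h,
    sum_eq_zero (s := Ico r n) fun k hk => by
      rw [extZ_of_le (mem_Ico.mp hk).1, zero_pow two_ne_zero],
    add_zero, ← Fin.sum_univ_eq_sum_range]
  simp [extZ_eq_extN, extN_val]

variable (r s n lam mu) in
def weightSeq (k : ℕ) : ℤ := extZ r lam k - extZ s mu (n - 1 - k)

theorem sum_hw_sq (h : r + s ≤ n) :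
    ∑ i : Fin n, hw r s n lam mu i ^ 2 = ((∑ i, lam i ^ 2 + ∑ j, mu j ^ 2 : ℕ) : ℤ) := by
  have disjoint_supports : ∀ k ∈ range n,
      weightSeq r s n lam mu k ^ 2 = extZ r lam k ^ 2 + extZ s mu (n - 1 - k) ^ 2 := by
    intro k hk
    rcases lt_or_ge k r with hkr | hkr
    · rw [weightSeq, extZ_of_le (k := n - 1 - k) (by simp at hk; omega)]
      ring
    · rw [weightSeq, extZ_of_le hkr]
      ring
  change ∑ i : Fin n, weightSeq r s n lam mu i ^ 2 = _
  rw [Fin.sum_univ_eq_sum_range (fun k => weightSeq r s n lam mu k ^ 2),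
    sum_congr rfl disjoint_supports, sum_add_distrib,
    sum_range_reflect (fun k => extZ s mu k ^ 2), sum_range_extZ_sq (by omega),
    sum_range_extZ_sq (by omega)]
  push_cast
  rfl

theorem weightSeq_eqOn_extZ :
    Set.EqOn (weightSeq r s n lam mu) (extZ r lam) (Set.Ico 0 (n - s)) := by
  intro k hk
  rw [weightSeq, extZ_of_le (k := n - 1 - k) (by simp at hk; omega), sub_zero]

theorem weightSeq_reflect_eqOn_extZ (h : r + s ≤ n) :
    Set.EqOn (fun k => -weightSeq r s n lam mu (n - 1 - k)) (extZ s mu) (Set.Ico 0 (n - r)) := by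
  intro k hk
  simp only [Set.mem_Ico] at hk
  dsimp only
  rw [weightSeq, show n - 1 - (n - 1 - k) = k by omega, extZ_of_le (k := n - 1 - k) (by omega)]
  ring

theorem modXPow_crossBlock {d : ℕ} (hn : d + r + s ≤ n) :
    modXPow d (∏ i ∈ range r, ∏ j ∈ Ico (n - s) n,
      rootFactor (weightSeq r s n lam mu) i j : R⟦X⟧) = 1 := by
  rw [map_prod]
  refine prod_eq_one fun i hi => ?_
  rw [map_prod]
  refine prod_eq_one fun j hj => ?_
  simp only [mem_range, mem_Ico] at hi hj
  rw [rootFactor, modXPow_one_sub_X_pow]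
  rw [Int.lt_toNat, weightSeq, weightSeq, extZ_of_le (k := n - 1 - i) (by omega),
    extZ_of_le (k := j) (by omega), extZ_eq_extN, extZ_eq_extN]
  omega

variable (r s lam mu) in
def cinfDen (d : ℕ) : R⟦X⟧ :=
  stableDen d * (weylDen r * contentProd r lam) * (weylDen s * contentProd s mu)

theorem modXPow_weylProd_weightSeq (hlam : Antitone lam) (hmu : Antitone mu) {d : ℕ}
    (hn : d + r + s ≤ n) :
    modXPow d (weylProd (weightSeq r s n lam mu) (range n) n * cinfDen r s lam mu d * qPoch d)
      = modXPow d (weylNum r lam * weylNum s mu * qPoch d ^ n : R⟦X⟧) := by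
  have hlamBlock : weylProd (weightSeq r s n lam mu) (range r) (n - s)
      = (weylProd (extZ r lam) (range r) (n - s) : R⟦X⟧) :=
    weylProd_congr (fun _ _ => Nat.zero_le _) weightSeq_eqOn_extZ
  have hmuBlock : weylProd (weightSeq r s n lam mu) (Ico r n) n
      = (weylProd (extZ s mu) (range s) (n - r) * ∏ L ∈ range (n - r - s), qPoch L : R⟦X⟧) := by
    rw [weylProd_Ico_eq_reflect, weylProd_congr (fun _ _ => Nat.zero_le _)
      (weightSeq_reflect_eqOn_extZ (by omega)), weylProd_range_eq_mul_Ico _ (by omega : s ≤ n - r),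
      weylProd_congr (b := 0) (fun _ hi => (mem_Ico.mp hi).1) fun k hk => extZ_of_le hk.1,
      weylProd_zero_Ico]
  -- each block meets the denominator factors that complete it to powers of `(X;X)_d`
  rw [cinfDen, weylProd_range_eq_blocks _ (show r ≤ n - s by omega) (Nat.sub_le n s),
    hlamBlock, hmuBlock,
    show ∀ A C B M S Dr Ds T : R⟦X⟧, A * C * (B * M) * (S * Dr * Ds) * T
      = Dr * A * C * (Ds * B) * (M * S * T) by intros; ring,
    weylDen_mul_contentProd_mul_weylProd hlam (by omega),
    weylDen_mul_contentProd_mul_weylProd hmu (by omega)]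
  have hmiddle := modXPow_prod_range_qPoch_mul (R := R) (show d ≤ n - r - s by omega)
  rw [map_mul, map_mul] at hmiddle
  simp only [map_mul]
  rw [modXPow_prod_qPoch _ _ fun i hi => by simp at hi; omega,
    modXPow_prod_qPoch _ _ fun i hi => by simp at hi; omega, modXPow_crossBlock hn, hmiddle,
    card_range, card_range, map_pow, ← pow_sub_mul_pow _ (show r + s ≤ n by omega),
    show n - (r + s) = n - r - s by omega]
  ring

end Weight

section Bridges

variable {K : Type*} [Field K] {r s : ℕ} {lam : Fin r → ℕ} {mu : Fin s → ℕ}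

theorem isUnit_qPoch (d : ℕ) : IsUnit (qPoch d : K⟦X⟧) :=
  IsUnit.prod_iff.mpr fun j hj => isUnit_one_sub_X_pow (by simp at hj; omega)

theorem isUnit_stableDen (d : ℕ) : IsUnit (stableDen d : K⟦X⟧) :=
  IsUnit.prod_iff.mpr fun j hj => (isUnit_one_sub_X_pow (by simp at hj; omega)).pow _

theorem isUnit_weylDen (r : ℕ) : IsUnit (weylDen r : K⟦X⟧) :=
  IsUnit.prod_iff.mpr fun q hq =>
    isUnit_one_sub_X_pow (by simp only [mem_filter, mem_univ, true_and] at hq; omega)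

theorem isUnit_contentProd : IsUnit (contentProd r lam : K⟦X⟧) :=
  IsUnit.prod_iff.mpr fun i _ => IsUnit.prod_iff.mpr fun k _ =>
    isUnit_one_sub_X_pow (by have := i.isLt; omega)

theorem isUnit_cinfDen (d : ℕ) : IsUnit (cinfDen r s lam mu d : K⟦X⟧) :=
  ((isUnit_stableDen d).mul ((isUnit_weylDen r).mul isUnit_contentProd)).mul
    ((isUnit_weylDen s).mul isUnit_contentProd)

theorem Cn_mul_qPoch_pow (n d : ℕ) :
    Cn r s lam mu n d * qPoch d ^ (n - 1)
      = X ^ ((∑ i : Fin n, hw r s n lam mu i ^ 2).toNat / 2)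
        * weylProd (weightSeq r s n lam mu) (range n) n := by
  have hpairs : ∏ q ∈ univ.filter (fun q : Fin n × Fin n => q.1 < q.2),
      (1 - X ^ ((hw r s n lam mu q.1 - hw r s n lam mu q.2 + ((q.2 : ℕ) : ℤ)
        - ((q.1 : ℕ) : ℤ)).toNat) : ℚ⟦X⟧)
      = weylProd (weightSeq r s n lam mu) (range n) n :=
    prod_filter_fin_lt n (rootFactor (weightSeq r s n lam mu))
  have hT : ∏ j ∈ Icc 1 d, (1 - X ^ j : ℚ⟦X⟧) = qPoch d := rfl
  rw [Cn, hpairs, hT, mul_assoc, ← mul_pow, inv_mul_cancel_of_isUnit (isUnit_qPoch d), one_pow,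
    mul_one]

theorem prod_inv_pow_mul_stableDen (d : ℕ) :
    (∏ j ∈ Icc 2 d, ((1 - X ^ j : K⟦X⟧)⁻¹) ^ (j - 1)) * stableDen d = 1 := by
  rw [stableDen, ← prod_mul_distrib]
  refine prod_eq_one fun j hj => ?_
  rw [← mul_pow, inv_mul_cancel_of_isUnit (isUnit_one_sub_X_pow (by simp at hj; omega)), one_pow]

theorem prod_mul_inv_mul_weylDen :
    (∏ q ∈ univ.filter (fun q : Fin r × Fin r => q.1 < q.2),
      (1 - X ^ (lam q.1 - lam q.2 + ((q.2 : ℕ) - (q.1 : ℕ))) : K⟦X⟧)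
        * (1 - X ^ ((q.2 : ℕ) - (q.1 : ℕ)))⁻¹) * weylDen r = weylNum r lam := by
  rw [weylDen, weylNum, ← prod_mul_distrib]
  refine prod_congr rfl fun q hq => ?_
  simp only [mem_filter, mem_univ, true_and] at hq
  rw [mul_assoc, inv_mul_cancel_of_isUnit (isUnit_one_sub_X_pow (by omega)), mul_one]

theorem prod_inv_mul_contentProd :
    (∏ i : Fin r, ∏ k ∈ range (lam i), (1 - X ^ (r + k - (i : ℕ)) : K⟦X⟧)⁻¹)
      * contentProd r lam = 1 := by
  rw [contentProd, ← prod_mul_distrib]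
  refine prod_eq_one fun i _ => ?_
  rw [← prod_mul_distrib]
  exact prod_eq_one fun k _ =>
    inv_mul_cancel_of_isUnit (isUnit_one_sub_X_pow (by have := i.isLt; omega))

theorem Cinf_mul_cinfDen (d : ℕ) :
    Cinf r s lam mu d * cinfDen r s lam mu d
      = X ^ ((∑ i, lam i ^ 2 + ∑ j, mu j ^ 2) / 2) * (weylNum r lam * weylNum s mu) := by
  rw [Cinf, cinfDen, show ∀ x a b c e f S Dr Cr Ds Cs : ℚ⟦X⟧,
      x * a * b * c * e * f * (S * (Dr * Cr) * (Ds * Cs))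
        = x * (a * S) * ((b * Dr) * (c * Ds)) * (e * Cr) * (f * Cs) by intros; ring,
    prod_inv_pow_mul_stableDen, prod_mul_inv_mul_weylDen, prod_mul_inv_mul_weylDen,
    prod_inv_mul_contentProd, prod_inv_mul_contentProd, mul_one, mul_one, mul_one]

end Bridges

end

theorem stmt_10_general (r s : ℕ) (lam : Fin r → ℕ) (mu : Fin s → ℕ)
    (hlam : Antitone lam) (hmu : Antitone mu) :
    ∀ d : ℕ, ∃ N : ℕ, ∀ n ≥ N,
      PowerSeries.coeff (R := ℚ) d (Cn r s lam mu n d) =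
        PowerSeries.coeff (R := ℚ) d (Cinf r s lam mu d) := by
  intro d
  refine ⟨d + r + s + 1, fun n hn => coeff_eq_of_modXPow_eq ?_⟩
  have hW : IsUnit (modXPow d (qPoch d ^ (n - 1) * cinfDen r s lam mu d * qPoch d : ℚ⟦X⟧)) :=
    ((((isUnit_qPoch d).pow _).mul (isUnit_cinfDen d)).mul (isUnit_qPoch d)).map (modXPow d)
  rw [← hW.mul_left_inj, ← map_mul, ← map_mul]
  calc modXPow d (Cn r s lam mu n d * (qPoch d ^ (n - 1) * cinfDen r s lam mu d * qPoch d))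
      = modXPow d (X ^ ((∑ i : Fin n, hw r s n lam mu i ^ 2).toNat / 2)
          * (weylProd (weightSeq r s n lam mu) (range n) n * cinfDen r s lam mu d * qPoch d)) := by
        simp only [← mul_assoc]
        rw [Cn_mul_qPoch_pow]
    _ = modXPow d (X ^ ((∑ i, lam i ^ 2 + ∑ j, mu j ^ 2) / 2)
          * (weylNum r lam * weylNum s mu * qPoch d ^ n)) := by
        rw [map_mul, modXPow_weylProd_weightSeq hlam hmu (by omega), ← map_mul,
          sum_hw_sq (by omega), Int.toNat_natCast]
    _ = modXPow d (Cinf r s lam mu d * (qPoch d ^ (n - 1) * cinfDen r s lam mu d * qPoch d)) := by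
        rw [← pow_sub_one_mul (by omega : n ≠ 0)]
        congr 1
        linear_combination
          (-(qPoch d ^ (n - 1) * qPoch d)) * Cinf_mul_cinfDen (lam := lam) (mu := mu) d

/-- For fixed partitions `λ, μ` with `|λ| = |μ|`, the coefficients of the series
`C_{[λ,μ]_n, n}(q)` stabilize as `n → ∞` to the coefficients of `C_{λ,μ,∞}(q)`:
for every degree `d` there is `N` such that for all `n ≥ N` the `q^d`-coefficients
agree. -/
theorem stmt_10 (r s : ℕ) (lam : Fin r → ℕ) (mu : Fin s → ℕ)
    (hlam : Antitone lam) (hmu : Antitone mu) (hsize : ∑ i, lam i = ∑ j, mu j) :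
    ∀ d : ℕ, ∃ N : ℕ, ∀ n ≥ N,
      PowerSeries.coeff (R := ℚ) d (Cn r s lam mu n d) =
        PowerSeries.coeff (R := ℚ) d (Cinf r s lam mu d) :=
  stmt_10_general r s lam mu hlam hmu

end Stmt10
end
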